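/- arXiv:2605.28276 — 13 statements merged into one kernel-verified Lean document; each statement's English description precedes it below -/
import Mathlib

section
/- Let X be a finite nonempty type and M ∈ ℝ^{X×X} a matrix with nonnegative entries such that every column of M sums to at most 1. Suppose there exists no probability vector ν ∈ ℝ^X (i.e., ν with nonnegative entries summing to 1) satisfying M ν = ν. Then every eigenvalue λ ∈ ℂ of M, viewed as a matrix over ℂ, satisfies |λ| < 1; equivalently, the spectral radius of M is strictly less than 1. -/
/-!
If `M v = λ v` with `|λ| ≥ 1`, the vector `w = |v|` satisfies `w ≤ |λ| w ≤ M w` entrywise by the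
triangle inequality. Since the column sums of `M` are at most `1`, the entries of `M w` sum to at
most those of `w`, which forces `M w = w`; normalising `w` gives a stationary probability vector.
-/

open Finset Matrix

namespace Matrix

variable {n : Type*} [Fintype n]

theorem exists_mulVec_eq_smul_of_isRoot_charpoly {K : Type*} [Field K] [DecidableEq n]
    {A : Matrix n n K} {μ : K} (h : A.charpoly.IsRoot μ) : ∃ v ≠ 0, A *ᵥ v = μ • v := by
  have hμ := mem_spectrum_iff_isRoot_charpoly.mpr h
  rw [← spectrum_toLin', ← Module.End.hasEigenvalue_iff_mem_spectrum] at hμ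
  obtain ⟨v, hv⟩ := hμ.exists_hasEigenvector
  exact ⟨v, hv.2, by simpa using hv.apply_eq_smul⟩

theorem norm_map_ofReal_mulVec_le {𝕜 : Type*} [RCLike 𝕜] {M : Matrix n n ℝ}
    (hM : ∀ i j, 0 ≤ M i j) (v : n → 𝕜) (i : n) :
    ‖(M.map ((↑) : ℝ → 𝕜) *ᵥ v) i‖ ≤ (M *ᵥ fun j => ‖v j‖) i :=
  calc ‖∑ j, (M i j : 𝕜) * v j‖
      ≤ ∑ j, ‖(M i j : 𝕜) * v j‖ := norm_sum_le _ _
    _ = ∑ j, M i j * ‖v j‖ := by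
        refine sum_congr rfl fun j _ => ?_
        rw [norm_mul, RCLike.norm_ofReal, abs_of_nonneg (hM i j)]

section OrderedRing

variable {R : Type*} [CommRing R] [PartialOrder R] [IsOrderedRing R] {M : Matrix n n R}

theorem sum_mulVec_le_sum (hcol : ∀ j, ∑ i, M i j ≤ 1) {w : n → R} (hw : 0 ≤ w) :
    ∑ i, (M *ᵥ w) i ≤ ∑ i, w i :=
  calc ∑ i, (M *ᵥ w) i = ∑ j, (∑ i, M i j) * w j := by
        simp only [mulVec, dotProduct, sum_mul]
        exact sum_comm
    _ ≤ ∑ j, w j := sum_le_sum fun j _ => mul_le_of_le_one_left (hw j) (hcol j)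

theorem mulVec_eq_of_le_mulVec (hcol : ∀ j, ∑ i, M i j ≤ 1) {w : n → R} (hw : 0 ≤ w)
    (hle : w ≤ M *ᵥ w) : M *ᵥ w = w := by
  have hsum : ∑ i, w i = ∑ i, (M *ᵥ w) i :=
    le_antisymm (sum_le_sum fun i _ => hle i) (sum_mulVec_le_sum hcol hw)
  funext i
  exact ((sum_eq_sum_iff_of_le fun i _ => hle i).mp hsum i (mem_univ i)).symm

end OrderedRing

theorem exists_stationary_of_mulVec_eq {R : Type*} [Field R] [LinearOrder R]
    [IsStrictOrderedRing R] {M : Matrix n n R} {w : n → R} (hw : 0 ≤ w) (hw0 : w ≠ 0)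
    (hfix : M *ᵥ w = w) :
    ∃ ν : n → R, (∀ i, 0 ≤ ν i) ∧ ∑ i, ν i = 1 ∧ M *ᵥ ν = ν := by
  have hpos : 0 < ∑ i, w i := by
    obtain ⟨i, hi⟩ := Function.ne_iff.mp hw0
    exact sum_pos' (fun j _ => hw j) ⟨i, mem_univ i, lt_of_le_of_ne (hw i) (Ne.symm hi)⟩
  refine ⟨(∑ i, w i)⁻¹ • w, fun i => mul_nonneg (inv_nonneg.mpr hpos.le) (hw i), ?_, ?_⟩
  · simp only [Pi.smul_apply, smul_eq_mul, ← mul_sum, inv_mul_cancel₀ hpos.ne']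
  · rw [mulVec_smul, hfix]

end Matrix

theorem spectral_radius_lt_one_of_no_stationary_general
    {X : Type*} [Fintype X] [DecidableEq X]
    (M : Matrix X X ℝ)
    (hnn : ∀ x' x : X, 0 ≤ M x' x)
    (hcol : ∀ x : X, ∑ x' : X, M x' x ≤ 1)
    (hno : ¬ ∃ ν : X → ℝ, (∀ x, 0 ≤ ν x) ∧ (∑ x, ν x = 1) ∧ M.mulVec ν = ν) :
    ∀ ev : ℂ, (Matrix.charpoly (M.map (fun a : ℝ => (a : ℂ)))).IsRoot ev →
      ‖ev‖ < 1 := by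
  intro ev hroot
  obtain ⟨v, hv0, hv⟩ := exists_mulVec_eq_smul_of_isRoot_charpoly hroot
  by_contra! hev
  set w : X → ℝ := fun x => ‖v x‖
  have hw : 0 ≤ w := fun x => norm_nonneg (v x)
  have hw0 : w ≠ 0 := fun h => hv0 (funext fun x => norm_eq_zero.mp (congrFun h x))
  have hle : w ≤ M *ᵥ w := fun x =>
    calc w x ≤ ‖ev‖ * w x := le_mul_of_one_le_left (hw x) hev
      _ = ‖(M.map (fun a : ℝ => (a : ℂ)) *ᵥ v) x‖ := by
          rw [hv, Pi.smul_apply, smul_eq_mul, norm_mul]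
      _ ≤ (M *ᵥ w) x := norm_map_ofReal_mulVec_le hnn v x
  exact hno (exists_stationary_of_mulVec_eq hw hw0 (mulVec_eq_of_le_mulVec hcol hw hle))

/-- Lemma B.4 (lem:inverse): a nonnegative matrix with column sums at most 1
that admits no stationary probability vector has spectral radius strictly
less than 1, i.e., every complex eigenvalue has modulus `< 1`. -/
theorem spectral_radius_lt_one_of_no_stationary
    {X : Type*} [Fintype X] [Nonempty X] [DecidableEq X]
    (M : Matrix X X ℝ)
    (hnn : ∀ x' x : X, 0 ≤ M x' x)
    (hcol : ∀ x : X, ∑ x' : X, M x' x ≤ 1)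
    (hno : ¬ ∃ ν : X → ℝ, (∀ x, 0 ≤ ν x) ∧ (∑ x, ν x = 1) ∧ M.mulVec ν = ν) :
    ∀ ev : ℂ, (Matrix.charpoly (M.map (fun a : ℝ => (a : ℂ)))).IsRoot ev →
      ‖ev‖ < 1 :=
  spectral_radius_lt_one_of_no_stationary_general M hnn hcol hno
end

section
/- Let (p₀, {T_u}_{u∈U}) be given, where {T_u} is a family of substochastic matrices and p₀ a probability vector, and assume φ : X → Z is surjective. Then there exists an entrance matrix Σ ∈ ℝ^{X×Z} making (p₀, {T_u}) quasi-Markov if and only if for every z ∈ Z the entrance space ς_z has dimension at most 1. -/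
noncomputable section

/-- The feature matrix `Φ ∈ ℝ^{Z×X}`, `Φ_{z,x} = [φ(x) = z]`. -/
def featMat {X Z : Type*} [DecidableEq Z] (φ : X → Z) : Matrix Z X ℝ :=
  Matrix.of fun z x => if φ x = z then 1 else 0

/-- The projection `Π_z ∈ ℝ^{X×X}` onto the states with feature `z`. -/
def proj {X Z : Type*} [DecidableEq X] [DecidableEq Z] (φ : X → Z) (z : Z) :
    Matrix X X ℝ :=
  Matrix.diagonal fun x => if φ x = z then 1 else 0

/-- The complementary projection `Π_z^⊥ := I − Π_z`. -/
def projPerp {X Z : Type*} [DecidableEq X] [DecidableEq Z] (φ : X → Z) (z : Z) :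
    Matrix X X ℝ :=
  1 - proj φ z

/-- A vector with nonnegative entries summing to 1. -/
def IsProbVec {X : Type*} [Fintype X] (v : X → ℝ) : Prop :=
  (∀ x, 0 ≤ v x) ∧ ∑ x, v x = 1

/-- A matrix with nonnegative entries whose columns each sum to at most 1. -/
def IsSubstochastic {X : Type*} [Fintype X] (M : Matrix X X ℝ) : Prop :=
  (∀ x' x, 0 ≤ M x' x) ∧ ∀ x, ∑ x', M x' x ≤ 1

/-- `(p₀, {T_u})` is quasi-Markov with entrance matrix `Σ`. -/
def IsQuasiMarkov {X Z U : Type*} [Fintype X] [Fintype Z] [DecidableEq X] [DecidableEq Z]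
    (φ : X → Z) (T : U → Matrix X X ℝ) (p₀ : X → ℝ) (S : Matrix X Z ℝ) : Prop :=
  (∀ z, IsProbVec (fun x => S x z) ∧
    (proj φ z).mulVec (fun x => S x z) = fun x => S x z) ∧
  p₀ = (S * featMat φ).mulVec p₀ ∧
  ∀ z u, proj φ z * T u * projPerp φ z = proj φ z * (S * featMat φ) * T u * projPerp φ z

/-- The entrance space `ς_z := Σ_u range(Π_z T_u Π_z^⊥) + span{Π_z p₀}`. -/
def entranceSpace {X Z U : Type*} [Fintype X] [DecidableEq X] [DecidableEq Z]
    (φ : X → Z) (T : U → Matrix X X ℝ) (p₀ : X → ℝ) (z : Z) : Submodule ℝ (X → ℝ) :=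
  (⨆ u : U, LinearMap.range (proj φ z * T u * projPerp φ z).mulVecLin) ⊔
    Submodule.span ℝ {(proj φ z).mulVec p₀}

/-!
If `Σ` is an entrance matrix, then `Π_z Σ Φ = σ_z φ_zᵀ`, so every generator of `ς_z` (both
`Π_z T_u Π_z^⊥ v` and `Π_z p₀ = Π_z Σ Φ p₀`) is a multiple of `σ_z`. Conversely, `ς_z` is spanned
by nonnegative vectors supported on `φ⁻¹(z)`; when it is a line, its normalized nonnegative
generator is a probability vector `σ_z`, and every `w ∈ ς_z` equals `(∑ w) σ_z`, which is exactly
what the quasi-Markov identities ask for. When `ς_z = 0`, any point mass on `φ⁻¹(z)` will do.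
-/

open Matrix Submodule

section

variable {X : Type*} [Fintype X]

lemma isProbVec_single [DecidableEq X] (x₀ : X) : IsProbVec (Pi.single x₀ (1 : ℝ)) := by
  refine ⟨fun x => ?_, by simp⟩
  rw [Pi.single_apply]
  split_ifs <;> norm_num

lemma isProbVec_inv_sum_smul {w : X → ℝ} (hw : ∀ x, 0 ≤ w x) (hw0 : w ≠ 0) :
    IsProbVec ((∑ x, w x)⁻¹ • w) := by
  obtain ⟨x₀, hx₀⟩ := Function.ne_iff.mp hw0
  have hsum : 0 < ∑ x, w x :=
    Finset.sum_pos' (fun x _ => hw x) ⟨x₀, Finset.mem_univ _, (hw x₀).lt_of_ne' hx₀⟩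
  refine ⟨fun x => mul_nonneg (inv_nonneg.mpr hsum.le) (hw x), ?_⟩
  simp only [Pi.smul_apply, smul_eq_mul, ← Finset.mul_sum, inv_mul_cancel₀ hsum.ne']

lemma IsProbVec.ne_zero {σ : X → ℝ} (hσ : IsProbVec σ) : σ ≠ 0 := by
  rintro rfl
  simpa using hσ.2

lemma eq_sum_smul_of_mem_span_singleton {σ w : X → ℝ} (hσ : ∑ x, σ x = 1)
    (hw : w ∈ ℝ ∙ σ) : w = (∑ x, w x) • σ := by
  obtain ⟨a, rfl⟩ := mem_span_singleton.mp hw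
  simp only [Pi.smul_apply, smul_eq_mul, ← Finset.mul_sum, hσ, mul_one]

end

section

variable {X Z : Type*} [Fintype X] [DecidableEq X] [DecidableEq Z] (φ : X → Z)

lemma proj_mulVec_apply (z : Z) (v : X → ℝ) (x : X) :
    (proj φ z *ᵥ v) x = if φ x = z then v x else 0 := by
  simp [proj, mulVec_diagonal, ite_mul]

lemma proj_mulVec_eq_self_iff {z : Z} {v : X → ℝ} :
    proj φ z *ᵥ v = v ↔ ∀ x, φ x ≠ z → v x = 0 := by
  simp only [funext_iff, proj_mulVec_apply]
  refine forall_congr' fun x => ?_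
  split_ifs with hx <;> simp [hx, eq_comm]

lemma proj_mul_proj (z : Z) : proj φ z * proj φ z = proj φ z := by
  rw [proj, diagonal_mul_diagonal]
  congr 1
  funext x
  split_ifs <;> norm_num

lemma proj_mul_mul_projPerp_apply (z : Z) (M : Matrix X X ℝ) (x' x : X) :
    (proj φ z * M * projPerp φ z) x' x = if φ x' = z ∧ φ x ≠ z then M x' x else 0 := by
  simp only [projPerp, Matrix.mul_sub, Matrix.mul_one, Matrix.sub_apply, Matrix.mul_assoc, proj,
    diagonal_mul, mul_diagonal]
  by_cases h' : φ x' = z <;> by_cases h : φ x = z <;> simp [h, h']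

lemma sum_proj_mulVec [Fintype Z] (z : Z) (v : X → ℝ) :
    ∑ x, (proj φ z *ᵥ v) x = (featMat φ *ᵥ v) z := by
  simp only [proj_mulVec_apply]
  simp [featMat, mulVec, dotProduct, ite_mul]

lemma proj_mul_featMat_mulVec [Fintype Z] {S : Matrix X Z ℝ}
    (hS : ∀ z, proj φ z *ᵥ (fun x => S x z) = fun x => S x z) (z : Z) (v : X → ℝ) :
    (proj φ z * (S * featMat φ)) *ᵥ v = (featMat φ *ᵥ v) z • fun x => S x z := by
  have hsupp : ∀ x z', φ x ≠ z' → S x z' = 0 := fun x z' =>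
    (proj_mulVec_eq_self_iff φ).mp (hS z') x
  funext x
  rw [← mulVec_mulVec, ← mulVec_mulVec, proj_mulVec_apply, Pi.smul_apply, smul_eq_mul]
  split_ifs with hx
  · subst hx
    rw [mulVec, dotProduct, Fintype.sum_eq_single (φ x) fun z' hz' => by
      rw [hsupp x z' (Ne.symm hz'), zero_mul]]
    ring
  · rw [hsupp x z hx, mul_zero]

end

section

variable {X Z U : Type*} [Fintype X] [DecidableEq X] [DecidableEq Z]
  (φ : X → Z) (T : U → Matrix X X ℝ) (p₀ : X → ℝ)

lemma proj_mulVec_mem_entranceSpace (z : Z) : proj φ z *ᵥ p₀ ∈ entranceSpace φ T p₀ z :=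
  mem_sup_right (mem_span_singleton_self _)

lemma proj_mul_mul_projPerp_mulVec_mem_entranceSpace (z : Z) (u : U) (v : X → ℝ) :
    (proj φ z * T u * projPerp φ z) *ᵥ v ∈ entranceSpace φ T p₀ z :=
  mem_sup_left (mem_iSup_of_mem u ⟨v, rfl⟩)

lemma entranceSpace_eq_span (z : Z) :
    entranceSpace φ T p₀ z = span ℝ
      ((⋃ u, Set.range (proj φ z * T u * projPerp φ z).col) ∪ {proj φ z *ᵥ p₀}) := by
  rw [span_union, span_iUnion, entranceSpace]
  simp only [range_mulVecLin]

lemma proj_mulVec_eq_self_of_mem_entranceSpace {z : Z} {w : X → ℝ}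
    (hw : w ∈ entranceSpace φ T p₀ z) : proj φ z *ᵥ w = w := by
  have hle : entranceSpace φ T p₀ z ≤ LinearMap.range (proj φ z).mulVecLin := by
    refine sup_le (iSup_le fun u => ?_) (span_le.mpr ?_)
    · rw [Matrix.mul_assoc, mulVecLin_mul]
      exact LinearMap.range_comp_le_range _ _
    · rintro _ rfl
      exact ⟨p₀, rfl⟩
  obtain ⟨v, rfl⟩ := hle hw
  simp only [mulVecLin_apply, mulVec_mulVec, proj_mul_proj]

lemma exists_nonneg_ne_zero_mem_entranceSpace (hT : ∀ u x' x, 0 ≤ T u x' x)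
    (hp₀ : ∀ x, 0 ≤ p₀ x) {z : Z} (hz : entranceSpace φ T p₀ z ≠ ⊥) :
    ∃ w ∈ entranceSpace φ T p₀ z, (∀ x, 0 ≤ w x) ∧ w ≠ 0 := by
  rw [entranceSpace_eq_span] at hz ⊢
  obtain ⟨w, hw, hw0⟩ := not_forall₂.mp (mt span_eq_bot.mpr hz)
  refine ⟨w, subset_span hw, ?_, hw0⟩
  simp only [Set.mem_union, Set.mem_iUnion, Set.mem_range, Set.mem_singleton_iff] at hw
  rcases hw with ⟨u, x, rfl⟩ | rfl <;> intro x'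
  · simp only [col_apply, proj_mul_mul_projPerp_apply]
    split_ifs
    exacts [hT u x' x, le_rfl]
  · rw [proj_mulVec_apply]
    split_ifs
    exacts [hp₀ x', le_rfl]

lemma exists_isProbVec_entranceSpace_le_span (hT : ∀ u x' x, 0 ≤ T u x' x)
    (hp₀ : ∀ x, 0 ≤ p₀ x) {z : Z} (hz : ∃ x, φ x = z)
    (hdim : Module.finrank ℝ (entranceSpace φ T p₀ z) ≤ 1) :
    ∃ σ, IsProbVec σ ∧ proj φ z *ᵥ σ = σ ∧ entranceSpace φ T p₀ z ≤ ℝ ∙ σ := by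
  by_cases hbot : entranceSpace φ T p₀ z = ⊥
  · obtain ⟨x₀, rfl⟩ := hz
    refine ⟨Pi.single x₀ 1, isProbVec_single x₀, ?_, hbot ▸ bot_le⟩
    refine (proj_mulVec_eq_self_iff φ).mpr fun x hx => Pi.single_eq_of_ne ?_ _
    rintro rfl
    exact hx rfl
  · obtain ⟨w, hw, hw_nonneg, hw0⟩ := exists_nonneg_ne_zero_mem_entranceSpace φ T p₀ hT hp₀ hbot
    have hσ := isProbVec_inv_sum_smul hw_nonneg hw0
    have hσ_mem : (∑ x, w x)⁻¹ • w ∈ entranceSpace φ T p₀ z := smul_mem _ _ hw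
    refine ⟨_, hσ, proj_mulVec_eq_self_of_mem_entranceSpace φ T p₀ hσ_mem, ?_⟩
    refine (eq_of_le_of_finrank_le (span_le.mpr (Set.singleton_subset_iff.mpr hσ_mem)) ?_).ge
    rwa [finrank_span_singleton hσ.ne_zero]

variable [Fintype Z]

lemma entranceSpace_le_span_of_isQuasiMarkov {S : Matrix X Z ℝ}
    (hS : IsQuasiMarkov φ T p₀ S) (z : Z) :
    entranceSpace φ T p₀ z ≤ ℝ ∙ fun x => S x z := by
  obtain ⟨hcols, hinit, htrans⟩ := hS
  have key := proj_mul_featMat_mulVec φ fun z => (hcols z).2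
  refine sup_le (iSup_le fun u => ?_) (span_le.mpr ?_)
  · rintro _ ⟨v, rfl⟩
    rw [mulVecLin_apply, htrans z u, Matrix.mul_assoc _ (T u), ← mulVec_mulVec, key]
    exact smul_mem _ _ (mem_span_singleton_self _)
  · rintro _ rfl
    rw [SetLike.mem_coe, hinit, mulVec_mulVec, key]
    exact smul_mem _ _ (mem_span_singleton_self _)

lemma isQuasiMarkov_of_entranceSpace_le_span (σ : Z → X → ℝ) (hσ : ∀ z, IsProbVec (σ z))
    (hσ_supp : ∀ z, proj φ z *ᵥ σ z = σ z) (hle : ∀ z, entranceSpace φ T p₀ z ≤ ℝ ∙ σ z) :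
    IsQuasiMarkov φ T p₀ (Matrix.of fun x z => σ z x) := by
  set S : Matrix X Z ℝ := Matrix.of fun x z => σ z x
  have hentrance : ∀ z v, proj φ z *ᵥ v ∈ entranceSpace φ T p₀ z →
      proj φ z *ᵥ v = (proj φ z * (S * featMat φ)) *ᵥ v := by
    intro z v hv
    rw [proj_mul_featMat_mulVec φ (S := S) hσ_supp, ← sum_proj_mulVec]
    exact eq_sum_smul_of_mem_span_singleton (hσ z).2 (hle z hv)
  refine ⟨fun z => ⟨hσ z, hσ_supp z⟩, funext fun x => ?_, fun z u => ?_⟩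
  · have h := congrFun (hentrance (φ x) p₀ (proj_mulVec_mem_entranceSpace φ T p₀ _)) x
    rwa [← mulVec_mulVec, proj_mulVec_apply, proj_mulVec_apply, if_pos rfl, if_pos rfl] at h
  · refine ext_of_mulVec_single fun x => ?_
    have h := hentrance z ((T u * projPerp φ z) *ᵥ Pi.single x 1) <| by
      rw [mulVec_mulVec, ← Matrix.mul_assoc]
      exact proj_mul_mul_projPerp_mulVec_mem_entranceSpace φ T p₀ z u _
    simpa only [mulVec_mulVec, Matrix.mul_assoc] using h

end

theorem quasiMarkov_iff_entrance_dim_le_one_general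
    {X Z U : Type*} [Fintype X] [Fintype Z] [DecidableEq X] [DecidableEq Z]
    (φ : X → Z) (hφ : Function.Surjective φ)
    (T : U → Matrix X X ℝ) (hT : ∀ u, IsSubstochastic (T u))
    (p₀ : X → ℝ) (hp₀ : IsProbVec p₀) :
    (∃ S : Matrix X Z ℝ, IsQuasiMarkov φ T p₀ S) ↔
      ∀ z : Z, Module.finrank ℝ (entranceSpace φ T p₀ z) ≤ 1 := by
  constructor
  · rintro ⟨S, hS⟩ z
    exact (finrank_mono (entranceSpace_le_span_of_isQuasiMarkov φ T p₀ hS z)).trans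
      (finrank_span_le_card _)
  · intro hdim
    choose σ hσ hσ_supp hle using fun z =>
      exists_isProbVec_entranceSpace_le_span φ T p₀ (fun u => (hT u).1) hp₀.1 (hφ z) (hdim z)
    exact ⟨_, isQuasiMarkov_of_entranceSpace_le_span φ T p₀ σ hσ hσ_supp hle⟩

/-- Lemma B.1 (lem:dim): a quasi-Markov entrance matrix exists iff every
entrance space has dimension at most 1. -/
theorem quasiMarkov_iff_entrance_dim_le_one
    {X Z U : Type*} [Fintype X] [Fintype Z] [Fintype U] [DecidableEq X] [DecidableEq Z]
    (φ : X → Z) (hφ : Function.Surjective φ)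
    (T : U → Matrix X X ℝ) (hT : ∀ u, IsSubstochastic (T u))
    (p₀ : X → ℝ) (hp₀ : IsProbVec p₀) :
    (∃ S : Matrix X Z ℝ, IsQuasiMarkov φ T p₀ S) ↔
      ∀ z : Z, Module.finrank ℝ (entranceSpace φ T p₀ z) ≤ 1 :=
  quasiMarkov_iff_entrance_dim_le_one_general φ hφ T hT p₀ hp₀
end
end

section
/- Suppose the family {T̄_ω}_{ω∈Ω} of substochastic matrices (Ω a finite nonempty set of options) satisfies the quasi-Markov entrance property with entrance matrix Σ ∈ ℝ^{X×Z}: every column σ_z of Σ is a probability vector with Π_z σ_z = σ_z, and Π_z T̄_ω Π_z^⊥ = Π_z Σ Φ T̄_ω Π_z^⊥ for all z ∈ Z and ω ∈ Ω. Let π : Z → Ω be a policy and r : Z → ℝ a reward function. Assume that for every z ∈ Z the matrix I − Π_z T̄_{π(z)} is invertible and that ψ̃_z := (I − Π_z T̄_{π(z)})⁻¹ σ_z satisfies 𝟙ᵀ ψ̃_z ≠ 0, and set ψ_z := ψ̃_z / (𝟙ᵀ ψ̃_z). Define the aggregate transition matrix T̂ ∈ ℝ^{Z×Z} by T̂_{z',z}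 := φ_{z'}ᵀ T̄_{π(z)} ψ_z. If v̄ ∈ ℝ^X satisfies the Bellman equation v̄(x) = ( T̄_{π(φ(x))}ᵀ ( Φᵀ r + v̄ ) )(x) for every x ∈ X, then v̂ := Σᵀ v̄ ∈ ℝ^Z satisfies the aggregate Bellman equation v̂(z) = ( T̂ᵀ ( r + v̂ ) )(z) for every z ∈ Z. -/
noncomputable section

open Matrix

/-- The row `φ_z` of the feature matrix, viewed as a vector in `ℝ^X`. -/
def featRow {X Z : Type*} [DecidableEq Z] (φ : X → Z) (z : Z) : X → ℝ :=
  fun x => if φ x = z then 1 else 0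

/-- Entrance Value Lemma (Lemma 4.3): if `v̄` solves the Bellman equation of the
latent MDP of a quasi-Markov environment, then `v̂ = Σᵀ v̄` solves the Bellman
equation of the aggregate MDP. -/
theorem entrance_value_lemma
    {X Z Ω : Type*} [Fintype X] [Fintype Z] [Fintype Ω] [Nonempty Ω]
    [DecidableEq X] [DecidableEq Z]
    (φ : X → Z) (Tb : Ω → Matrix X X ℝ) (hTb : ∀ ω, IsSubstochastic (Tb ω))
    (S : Matrix X Z ℝ)
    (hS : ∀ z, IsProbVec (fun x => S x z) ∧
      (proj φ z).mulVec (fun x => S x z) = fun x => S x z)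
    (hqm : ∀ z ω, proj φ z * Tb ω * projPerp φ z =
      proj φ z * (S * featMat φ) * Tb ω * projPerp φ z)
    (π : Z → Ω) (r : Z → ℝ)
    (hinv : ∀ z : Z, IsUnit (1 - proj φ z * Tb (π z)))
    (ψt : Z → X → ℝ)
    (hψt : ∀ z, ψt z = (1 - proj φ z * Tb (π z))⁻¹.mulVec (fun x => S x z))
    (hψtsum : ∀ z, ∑ x, ψt z x ≠ 0)
    (ψ : Z → X → ℝ) (hψ : ∀ z, ψ z = (∑ x, ψt z x)⁻¹ • ψt z)
    (That : Matrix Z Z ℝ)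
    (hThat : ∀ z' z, That z' z = featRow φ z' ⬝ᵥ (Tb (π z)).mulVec (ψ z))
    (vbar : X → ℝ)
    (hbell : ∀ x, vbar x =
      ((Tb (π (φ x))).transpose.mulVec ((featMat φ).transpose.mulVec r + vbar)) x)
    (vhat : Z → ℝ) (hvhat : vhat = S.transpose.mulVec vbar) :
    ∀ z, vhat z = (That.transpose.mulVec (r + vhat)) z := by
  classical
  have hS0 : ∀ (w : Z) (x : X), φ x ≠ w → S x w = 0 := by
    intro w x hx
    have h := congrFun (hS w).2 x
    simp only [proj, Matrix.mulVec_diagonal, if_neg hx, zero_mul] at h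
    exact h.symm
  have hS1 : ∀ w : Z, ∑ x, S x w = 1 := fun w => (hS w).1.2
  have hvh : ∀ w, vhat w = ∑ x, S x w * vbar x := by
    intro w
    rw [hvhat]
    simp [Matrix.mulVec, dotProduct, Matrix.transpose_apply]
  intro z
  -- scalar form of the ψ̃ equation
  have hE1 : ∀ x, ψt z x = S x z
      + (if φ x = z then (1:ℝ) else 0) * ∑ y, Tb (π z) x y * ψt z y := by
    intro x
    have hmul : (1 - proj φ z * Tb (π z)) * (1 - proj φ z * Tb (π z))⁻¹ = 1 :=
      Matrix.mul_nonsing_inv _ ((Matrix.isUnit_iff_isUnit_det _).mp (hinv z))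
    have h : (1 - proj φ z * Tb (π z)).mulVec (ψt z) = fun x => S x z := by
      rw [hψt z, mulVec_mulVec, hmul, one_mulVec]
    have hx := congrFun h x
    rw [sub_mulVec, one_mulVec, Pi.sub_apply] at hx
    have h2 : (proj φ z * Tb (π z)).mulVec (ψt z) x
        = (if φ x = z then (1:ℝ) else 0) * ∑ y, Tb (π z) x y * ψt z y := by
      rw [← mulVec_mulVec, proj, Matrix.mulVec_diagonal]
      congr 1
    rw [h2] at hx
    linarith
  have hψ0 : ∀ x, φ x ≠ z → ψt z x = 0 := by
    intro x hx
    rw [hE1 x, if_neg hx, zero_mul, hS0 z x hx, add_zero]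
  -- scalar Bellman equation on block z
  have hfeat : ∀ y : X, ((featMat φ).transpose.mulVec r) y = r (φ y) := by
    intro y
    simp only [Matrix.mulVec, dotProduct, Matrix.transpose_apply, featMat,
      Matrix.of_apply, ite_mul, one_mul, zero_mul]
    rw [Finset.sum_ite_eq]
    simp
  have hbz : ∀ x, φ x = z →
      vbar x = ∑ y, Tb (π z) y x * (r (φ y) + vbar y) := by
    intro x hx
    have h := hbell x
    rw [hx] at h
    rw [h]
    rw [show ((featMat φ).transpose.mulVec r + vbar) = fun y => r (φ y) + vbar y from
      funext fun y => by rw [Pi.add_apply, hfeat y]]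
    simp [Matrix.mulVec, dotProduct, Matrix.transpose_apply]
  -- pointwise quasi-Markov property
  have hperp : ∀ (M : Matrix X X ℝ) (w : Z) (y x : X), φ x ≠ w →
      (M * projPerp φ w) y x = M y x := by
    intro M w y x hx
    rw [projPerp, Matrix.mul_sub, Matrix.mul_one, Matrix.sub_apply]
    have h0 : (M * proj φ w) y x = 0 := by
      rw [proj, Matrix.mul_diagonal, if_neg hx, mul_zero]
    rw [h0, sub_zero]
  have hprojl : ∀ (M : Matrix X X ℝ) (w : Z) (y x : X), φ y = w →
      (proj φ w * M) y x = M y x := by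
    intro M w y x hy
    rw [proj, Matrix.diagonal_mul, if_pos hy, one_mul]
  have hQM : ∀ x y, φ x = z → φ y ≠ z →
      Tb (π z) y x
        = S y (φ y) * ∑ y', (if φ y' = φ y then (1:ℝ) else 0) * Tb (π z) y' x := by
    intro x y hx hy
    have hxw : φ x ≠ φ y := by rw [hx]; exact fun h => hy h.symm
    have h := congrFun (congrFun (hqm (φ y) (π z)) y) x
    rw [hperp _ _ _ _ hxw, hperp _ _ _ _ hxw, hprojl _ _ _ _ rfl] at h
    have h2 : (proj φ (φ y) * (S * featMat φ) * Tb (π z)) y x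
        = ∑ y', S y (φ y') * Tb (π z) y' x := by
      rw [Matrix.mul_apply]
      refine Finset.sum_congr rfl fun y' _ => ?_
      congr 1
      rw [hprojl _ _ _ _ rfl, Matrix.mul_apply]
      simp only [featMat, Matrix.of_apply, mul_ite, mul_one, mul_zero]
      rw [Finset.sum_ite_eq]
      simp
    rw [h2] at h
    rw [h, Finset.mul_sum]
    refine Finset.sum_congr rfl fun y' _ => ?_
    by_cases hyy : φ y' = φ y
    · rw [hyy, if_pos rfl]; ring
    · rw [if_neg hyy, hS0 (φ y') y (fun h' => hyy h'.symm)]; ring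
  -- Step A: unroll Bellman through the block, via the ψ̃ equation
  have stepA : vhat z = ∑ x, ψt z x * ∑ y, Tb (π z) y x *
      (r (φ y) + (if φ y = z then 0 else vbar y)) := by
    have h1 : vhat z = (∑ x, ψt z x * vbar x)
        - ∑ x, (if φ x = z then (1:ℝ) else 0) * (∑ y, Tb (π z) x y * ψt z y) * vbar x := by
      rw [hvh z, ← Finset.sum_sub_distrib]
      refine Finset.sum_congr rfl fun x _ => ?_
      have h := hE1 x
      have hsxz : S x z
          = ψt z x - (if φ x = z then (1:ℝ) else 0) * ∑ y, Tb (π z) x y * ψt z y := by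
        linarith
      rw [hsxz]; ring
    have h2 : (∑ x, ψt z x * vbar x)
        = ∑ x, ψt z x * ∑ y, Tb (π z) y x * (r (φ y) + vbar y) := by
      refine Finset.sum_congr rfl fun x _ => ?_
      by_cases hx : φ x = z
      · rw [hbz x hx]
      · rw [hψ0 x hx, zero_mul, zero_mul]
    have h3 : (∑ x, (if φ x = z then (1:ℝ) else 0) * (∑ y, Tb (π z) x y * ψt z y) * vbar x)
        = ∑ x, ψt z x * ∑ y, (if φ y = z then (1:ℝ) else 0) * Tb (π z) y x * vbar y := by
      have l : (∑ x, (if φ x = z then (1:ℝ) else 0) * (∑ y, Tb (π z) x y * ψt z y) * vbar x)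
          = ∑ x, ∑ y, (if φ x = z then (1:ℝ) else 0) * Tb (π z) x y * ψt z y * vbar x := by
        refine Finset.sum_congr rfl fun x _ => ?_
        rw [Finset.mul_sum, Finset.sum_mul]
        exact Finset.sum_congr rfl fun y _ => by ring
      rw [l, Finset.sum_comm]
      refine Finset.sum_congr rfl fun x _ => ?_
      rw [Finset.mul_sum]
      exact Finset.sum_congr rfl fun y _ => by ring
    rw [h1, h2, h3, ← Finset.sum_sub_distrib]
    refine Finset.sum_congr rfl fun x _ => ?_
    rw [← mul_sub, ← Finset.sum_sub_distrib]
    congr 1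
    refine Finset.sum_congr rfl fun y _ => ?_
    by_cases hy : φ y = z
    · rw [if_pos hy, if_pos hy, one_mul]; ring
    · rw [if_neg hy, if_neg hy, zero_mul]; ring
  -- Step B (quasi-Markov): replace vbar by vhat ∘ φ outside the block
  have stepB : ∀ x, φ x = z →
      (∑ y, (if φ y = z then 0 else Tb (π z) y x * vbar y))
        = ∑ y, (if φ y = z then 0 else Tb (π z) y x * vhat (φ y)) := by
    intro x hx
    have lhs : (∑ y, (if φ y = z then 0 else Tb (π z) y x * vbar y))
        = ∑ y, ∑ y', (if φ y = z then 0 else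
            (if φ y' = φ y then (1:ℝ) else 0) * S y (φ y) * Tb (π z) y' x * vbar y) := by
      refine Finset.sum_congr rfl fun y _ => ?_
      by_cases hy : φ y = z
      · simp [hy]
      · simp only [if_neg hy]
        rw [hQM x y hx hy, Finset.mul_sum, Finset.sum_mul]
        exact Finset.sum_congr rfl fun y' _ => by ring
    have rhs : (∑ y, ∑ y', (if φ y' = z then 0 else
            Tb (π z) y' x * S y (φ y') * vbar y))
        = ∑ y, (if φ y = z then 0 else Tb (π z) y x * vhat (φ y)) := by
      rw [Finset.sum_comm]
      refine Finset.sum_congr rfl fun y' _ => ?_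
      by_cases hy : φ y' = z
      · simp [hy]
      · simp only [if_neg hy]
        rw [hvh (φ y'), Finset.mul_sum]
        exact Finset.sum_congr rfl fun y'' _ => by ring
    rw [lhs, ← rhs]
    refine Finset.sum_congr rfl fun y _ => Finset.sum_congr rfl fun y' _ => ?_
    by_cases hyy : φ y' = φ y
    · by_cases hy : φ y = z
      · rw [if_pos hy, if_pos (hyy.trans hy)]
      · rw [if_neg hy, if_neg (fun h => hy (hyy ▸ h)), if_pos hyy, hyy]
        ring
    · have hz0 : S y (φ y') = 0 := hS0 (φ y') y fun h' => hyy h'.symm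
      by_cases hy : φ y = z
      · rw [if_pos hy]
        by_cases hy' : φ y' = z
        · rw [if_pos hy']
        · rw [if_neg hy', hz0]; ring
      · rw [if_neg hy, if_neg hyy]
        by_cases hy' : φ y' = z
        · rw [if_pos hy']; ring
        · rw [if_neg hy', hz0]; ring
  -- key identity
  have keyK : vhat z = ∑ x, ψt z x * ∑ y, Tb (π z) y x *
      (r (φ y) + (if φ y = z then 0 else vhat (φ y))) := by
    rw [stepA]
    refine Finset.sum_congr rfl fun x _ => ?_
    by_cases hx : φ x = z
    · congr 1
      have e1 : (∑ y, Tb (π z) y x * (r (φ y) + (if φ y = z then 0 else vbar y)))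
          = (∑ y, Tb (π z) y x * r (φ y))
            + ∑ y, (if φ y = z then 0 else Tb (π z) y x * vbar y) := by
        rw [← Finset.sum_add_distrib]
        refine Finset.sum_congr rfl fun y _ => ?_
        by_cases hy : φ y = z
        · simp only [if_pos hy]; ring
        · simp only [if_neg hy]; ring
      have e2 : (∑ y, Tb (π z) y x * (r (φ y) + (if φ y = z then 0 else vhat (φ y))))
          = (∑ y, Tb (π z) y x * r (φ y))
            + ∑ y, (if φ y = z then 0 else Tb (π z) y x * vhat (φ y)) := by
        rw [← Finset.sum_add_distrib]
        refine Finset.sum_congr rfl fun y _ => ?_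
        by_cases hy : φ y = z
        · simp only [if_pos hy]; ring
        · simp only [if_neg hy]; ring
      rw [e1, e2, stepB x hx]
    · rw [hψ0 x hx, zero_mul, zero_mul]
  -- normalization constant identity
  have hc : (∑ x, ψt z x) ≠ 0 := hψtsum z
  have hB : (∑ x, ψt z x)
      = 1 + ∑ x, ψt z x * ∑ y, (if φ y = z then (1:ℝ) else 0) * Tb (π z) y x := by
    calc ∑ x, ψt z x
        = ∑ x, (S x z + (if φ x = z then (1:ℝ) else 0) * ∑ y, Tb (π z) x y * ψt z y) :=
          Finset.sum_congr rfl fun x _ => hE1 x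
      _ = (∑ x, S x z)
            + ∑ x, ∑ y, (if φ x = z then (1:ℝ) else 0) * Tb (π z) x y * ψt z y := by
          rw [Finset.sum_add_distrib]
          congr 1
          refine Finset.sum_congr rfl fun x _ => ?_
          rw [Finset.mul_sum]
          exact Finset.sum_congr rfl fun y _ => by ring
      _ = 1 + ∑ y, ∑ x, (if φ x = z then (1:ℝ) else 0) * Tb (π z) x y * ψt z y := by
          rw [hS1 z, Finset.sum_comm]
      _ = 1 + ∑ x, ψt z x * ∑ y, (if φ y = z then (1:ℝ) else 0) * Tb (π z) y x := by
          congr 1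
          refine Finset.sum_congr rfl fun y _ => ?_
          rw [Finset.mul_sum]
          exact Finset.sum_congr rfl fun x _ => by ring
  -- compute the aggregate Bellman right-hand side
  have hψx : ∀ x, ψ z x = (∑ x', ψt z x')⁻¹ * ψt z x := by
    intro x
    rw [hψ z]
    simp
  have hR : (That.transpose.mulVec (r + vhat)) z
      = (∑ x, ψt z x)⁻¹
        * ∑ x, ψt z x * ∑ y, Tb (π z) y x * (r (φ y) + vhat (φ y)) := by
    have h1 : (That.transpose.mulVec (r + vhat)) z
        = ∑ z', That z' z * (r z' + vhat z') := by
      simp [Matrix.mulVec, dotProduct, Matrix.transpose_apply]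
    have h2 : ∀ z' : Z, That z' z
        = ∑ y, (if φ y = z' then (1:ℝ) else 0) * ∑ x, Tb (π z) y x * ψ z x := by
      intro z'
      rw [hThat z' z]
      simp [dotProduct, Matrix.mulVec, featRow]
    calc (That.transpose.mulVec (r + vhat)) z
        = ∑ z', That z' z * (r z' + vhat z') := h1
      _ = ∑ z', ∑ y, (if φ y = z' then (1:ℝ) else 0)
            * ((∑ x, Tb (π z) y x * ψ z x) * (r z' + vhat z')) := by
          refine Finset.sum_congr rfl fun z' _ => ?_
          rw [h2 z', Finset.sum_mul]
          exact Finset.sum_congr rfl fun y _ => by ring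
      _ = ∑ y, ∑ z', (if φ y = z' then (1:ℝ) else 0)
            * ((∑ x, Tb (π z) y x * ψ z x) * (r z' + vhat z')) := Finset.sum_comm
      _ = ∑ y, (∑ x, Tb (π z) y x * ψ z x) * (r (φ y) + vhat (φ y)) := by
          refine Finset.sum_congr rfl fun y _ => ?_
          simp only [ite_mul, one_mul, zero_mul]
          rw [Finset.sum_ite_eq]
          simp
      _ = ∑ y, ∑ x, (∑ x', ψt z x')⁻¹
            * (ψt z x * (Tb (π z) y x * (r (φ y) + vhat (φ y)))) := by
          refine Finset.sum_congr rfl fun y _ => ?_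
          rw [Finset.sum_mul]
          refine Finset.sum_congr rfl fun x _ => ?_
          rw [hψx x]; ring
      _ = ∑ x, ∑ y, (∑ x', ψt z x')⁻¹
            * (ψt z x * (Tb (π z) y x * (r (φ y) + vhat (φ y)))) := Finset.sum_comm
      _ = (∑ x, ψt z x)⁻¹
            * ∑ x, ψt z x * ∑ y, Tb (π z) y x * (r (φ y) + vhat (φ y)) := by
          rw [Finset.mul_sum]
          refine Finset.sum_congr rfl fun x _ => ?_
          rw [Finset.mul_sum, Finset.mul_sum]
          all_goals exact Finset.sum_congr rfl fun y _ => by ring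
  -- split off the in-block part of the value term
  have hsplit : ∀ x, (∑ y, Tb (π z) y x * (r (φ y) + vhat (φ y)))
      = (∑ y, Tb (π z) y x * (r (φ y) + (if φ y = z then 0 else vhat (φ y))))
        + (∑ y, (if φ y = z then (1:ℝ) else 0) * Tb (π z) y x) * vhat z := by
    intro x
    rw [Finset.sum_mul, ← Finset.sum_add_distrib]
    refine Finset.sum_congr rfl fun y _ => ?_
    by_cases hy : φ y = z
    · simp only [if_pos hy]; rw [hy]; ring
    · simp only [if_neg hy]; ring
  rw [hR]
  have hfin : (∑ x, ψt z x * ∑ y, Tb (π z) y x * (r (φ y) + vhat (φ y)))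
      = (∑ x, ψt z x) * vhat z := by
    calc (∑ x, ψt z x * ∑ y, Tb (π z) y x * (r (φ y) + vhat (φ y)))
        = ∑ x, (ψt z x * ∑ y, Tb (π z) y x * (r (φ y) + (if φ y = z then 0 else vhat (φ y)))
            + ψt z x * (∑ y, (if φ y = z then (1:ℝ) else 0) * Tb (π z) y x) * vhat z) := by
          refine Finset.sum_congr rfl fun x _ => ?_
          rw [hsplit x]; ring
      _ = vhat z
            + (∑ x, ψt z x * ∑ y, (if φ y = z then (1:ℝ) else 0) * Tb (π z) y x) * vhat z := by
          rw [Finset.sum_add_distrib, ← keyK]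
          congr 1
          rw [Finset.sum_mul]
          all_goals exact Finset.sum_congr rfl fun x _ => by ring
      _ = (∑ x, ψt z x) * vhat z := by rw [hB]; ring
  rw [hfin, inv_mul_cancel_left₀ hc]
end
end

section
/- Suppose the matrix T̄ ∈ ℝ^{X×X} satisfies the quasi-Markov entrance property with entrance matrix Σ ∈ ℝ^{X×Z}: every column σ_{z'} of Σ is a probability vector with Π_{z'} σ_{z'} = σ_{z'}, and Π_{z'} T̄ Π_{z'}^⊥ = Π_{z'} Σ Φ T̄ Π_{z'}^⊥ for all z' ∈ Z. Then for every z ∈ Z and every vector ψ ∈ ℝ^X with Π_z ψ = ψ, one has Π_z^⊥ T̄ ψ = Σ_{z' ≠ z} ( φ_{z'}ᵀ T̄ ψ ) σ_{z'}, and consequently ( I − Σ Φ ) ( Π_z^⊥ T̄ ψ ) = 0. -/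
noncomputable section

open Matrix

/-- The key intermediate identity in the proof of the Entrance Value Lemma
(Lemma 4.3): under the quasi-Markov entrance property, for any vector `ψ`
supported on feature `z`, `Π_z^⊥ T̄ ψ = Σ_{z' ≠ z} (φ_{z'}ᵀ T̄ ψ) σ_{z'}`, and
consequently `(I − Σ Φ)(Π_z^⊥ T̄ ψ) = 0`. -/
theorem entrance_value_key_identity
    {X Z : Type*} [Fintype X] [Fintype Z] [DecidableEq X] [DecidableEq Z]
    (φ : X → Z) (Tb : Matrix X X ℝ) (S : Matrix X Z ℝ)
    (hS : ∀ z', IsProbVec (fun x => S x z') ∧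
      (proj φ z').mulVec (fun x => S x z') = fun x => S x z')
    (hqm : ∀ z', proj φ z' * Tb * projPerp φ z' =
      proj φ z' * (S * featMat φ) * Tb * projPerp φ z') :
    ∀ z : Z, ∀ ψ : X → ℝ, (proj φ z).mulVec ψ = ψ →
      ((projPerp φ z).mulVec (Tb.mulVec ψ) =
        ∑ z' ∈ Finset.univ.filter (fun z' => z' ≠ z),
          (featRow φ z' ⬝ᵥ Tb.mulVec ψ) • (fun x => S x z')) ∧
      (1 - S * featMat φ).mulVec ((projPerp φ z).mulVec (Tb.mulVec ψ)) = 0 := by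

  intro z ψ hψ
  have hsupp : ∀ z' x, φ x ≠ z' → S x z' = 0 := by
    intro z' x hx
    have h := congrFun (hS z').2 x
    rw [proj, Matrix.mulVec_diagonal] at h
    simpa [hx] using h.symm
  have hsum : ∀ z', ∑ x, S x z' = 1 := fun z' => (hS z').1.2
  have hψ0 : ∀ x, φ x ≠ z → ψ x = 0 := by
    intro x hx
    have h := congrFun hψ x
    rw [proj, Matrix.mulVec_diagonal] at h
    simpa [hx] using h.symm
  set u := Tb.mulVec ψ with hu
  have claimA : ∀ z', z' ≠ z →
      (proj φ z').mulVec u = (featRow φ z' ⬝ᵥ u) • (fun x => S x z') := by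
    intro z' hz'
    have hfix : (projPerp φ z').mulVec ψ = ψ := by
      funext x
      rw [projPerp, Matrix.sub_mulVec, Matrix.one_mulVec, Pi.sub_apply, proj,
        Matrix.mulVec_diagonal]
      by_cases hx : φ x = z'
      · have : ψ x = 0 := hψ0 x (by rw [hx]; exact hz')
        simp [this]
      · simp [hx]
    have hq := congrArg (fun M => M.mulVec ψ) (hqm z')
    simp only [← Matrix.mulVec_mulVec, hfix] at hq
    rw [← hu] at hq
    rw [hq]
    funext x
    rw [proj, Matrix.mulVec_diagonal]
    simp only [Pi.smul_apply, smul_eq_mul]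
    by_cases hx : φ x = z'
    · rw [hx, if_pos rfl, one_mul]
      have hrow : (featMat φ).mulVec u z' = featRow φ z' ⬝ᵥ u := by
        simp [featMat, featRow, mulVec, dotProduct]
      have := Finset.sum_eq_single (s := Finset.univ)
        (f := fun z'' => S x z'' * (featMat φ).mulVec u z'') z'
        (fun z'' _ hne => by
          show S x z'' * (featMat φ).mulVec u z'' = 0
          rw [hsupp z'' x (fun h => hne (hx.symm.trans h).symm), zero_mul])
        (fun h => absurd (Finset.mem_univ z') h)
      calc (S.mulVec ((featMat φ).mulVec u)) x
          = ∑ z'', S x z'' * (featMat φ).mulVec u z'' := rfl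
        _ = S x z' * (featMat φ).mulVec u z' := this
        _ = (featRow φ z' ⬝ᵥ u) * S x z' := by rw [hrow, mul_comm]
    · rw [if_neg hx, zero_mul, hsupp z' x hx, mul_zero]
  have hterm : ∀ (z' : Z) (x : X), (proj φ z').mulVec u x
      = if φ x = z' then u x else 0 := by
    intro z' x
    rw [proj, Matrix.mulVec_diagonal]
    by_cases hx : φ x = z' <;> simp [hx]
  have hdecomp : (projPerp φ z).mulVec u =
      ∑ z' ∈ Finset.univ.filter (fun z' => z' ≠ z), (proj φ z').mulVec u := by
    funext x
    rw [Finset.sum_apply]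
    rw [Finset.sum_congr rfl (fun z' _ => hterm z' x)]
    rw [Finset.sum_ite_eq _ (φ x) (fun _ => u x)]
    rw [projPerp, Matrix.sub_mulVec, Matrix.one_mulVec, Pi.sub_apply, hterm z x]
    by_cases h : φ x = z <;> simp [h]
  have goal1 : (projPerp φ z).mulVec u =
      ∑ z' ∈ Finset.univ.filter (fun z' => z' ≠ z),
        (featRow φ z' ⬝ᵥ u) • (fun x => S x z') := by
    rw [hdecomp]
    exact Finset.sum_congr rfl (fun z' hz' =>
      claimA z' (Finset.mem_filter.mp hz').2)
  refine ⟨goal1, ?_⟩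
  have hfixcol : ∀ z', (S * featMat φ).mulVec (fun x => S x z') = fun x => S x z' := by
    intro z'
    funext x
    rw [← Matrix.mulVec_mulVec]
    have hrow : (featMat φ).mulVec (fun x => S x z') = fun z'' => if z'' = z' then 1 else 0 := by
      funext z''
      have : ∀ y, (if φ y = z'' then (1:ℝ) else 0) * S y z'
          = if z'' = z' then S y z' else 0 := by
        intro y
        by_cases hy : φ y = z''
        · by_cases hy' : z'' = z'
          · simp [hy, hy']
          · simp [hy, hy', hsupp z' y (hy ▸ hy')]
        · by_cases hy' : φ y = z'
          · simp [hy, show z'' ≠ z' from fun h => hy (hy'.trans h.symm)]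
          · simp [hy, hsupp z' y hy']
      calc (featMat φ).mulVec (fun x => S x z') z''
          = ∑ y, (if φ y = z'' then (1:ℝ) else 0) * S y z' := rfl
        _ = ∑ y, if z'' = z' then S y z' else 0 :=
            Finset.sum_congr rfl (fun y _ => this y)
        _ = if z'' = z' then 1 else 0 := by
            by_cases h : z'' = z' <;> simp [h, hsum z']
    rw [hrow]
    calc S.mulVec (fun z'' => if z'' = z' then (1:ℝ) else 0) x
        = ∑ z'', S x z'' * if z'' = z' then 1 else 0 := rfl
      _ = S x z' := by simp
  rw [goal1, Matrix.sub_mulVec, Matrix.one_mulVec, sub_eq_zero]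
  rw [show (S * featMat φ).mulVec = (S * featMat φ).mulVecLin from rfl]
  rw [map_sum]
  refine (Finset.sum_congr rfl fun z' _ => ?_).symm
  rw [_root_.map_smul, Matrix.mulVecLin_apply, hfixcol z']
end
end

section
/- Suppose (p₀, {T_u}_{u∈U}) is quasi-Markov with entrance matrix Σ ∈ ℝ^{X×Z}. Let p̄₀ ∈ ℝ^X be a probability vector and {T̄_u}_{u∈U} a family of substochastic matrices satisfying the rewiring conditions: (i) Φ p̄₀ = Φ p₀; (ii) Φ T̄_u = Φ T_u for all u ∈ U; (iii) Π_z T̄_u Π_z = Π_z T_u Π_z for all z ∈ Z and u ∈ U; (iv) ς̄_z ⊆ ς_z for all z ∈ Z, where ς̄_z := Σ_{u∈U} range(Π_z T̄_u Π_z^⊥) + span{Π_z p̄₀} and ς_z := Σ_{u∈U} range(Π_z T_u Π_z^⊥) + span{Π_z p₀}. Then p̄₀ = p₀ and T̄_u = T_u for every u ∈ U. -/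
noncomputable section

open Matrix

section Aux
variable {X Z : Type*} [Fintype X] [Fintype Z] [DecidableEq X] [DecidableEq Z]

lemma proj_mul_apply (φ : X → Z) (z : Z) (A : Matrix X X ℝ) (x y : X) :
    (proj φ z * A) x y = (if φ x = z then 1 else 0) * A x y := by
  simp [proj, Matrix.diagonal_mul]

lemma projPerp_eq_diagonal (φ : X → Z) (z : Z) :
    projPerp φ z = Matrix.diagonal (fun x => if φ x = z then 0 else 1) := by
  ext a b
  by_cases h : a = b <;>
    simp [projPerp, proj, Matrix.one_apply, Matrix.diagonal_apply, h] <;> split_ifs <;> norm_num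

lemma mul_projPerp_apply (φ : X → Z) (z : Z) (A : Matrix X X ℝ) (x y : X) :
    (A * projPerp φ z) x y = A x y * (if φ y = z then 0 else 1) := by
  rw [projPerp_eq_diagonal, Matrix.mul_diagonal]

lemma sandwich_apply (φ : X → Z) (z : Z) (A : Matrix X X ℝ) (x y : X) :
    (proj φ z * A * projPerp φ z) x y
      = (if φ x = z then 1 else 0) * A x y * (if φ y = z then 0 else 1) := by
  rw [mul_projPerp_apply, proj_mul_apply]

lemma projS_mul_apply (φ : X → Z) (S : Matrix X Z ℝ)
    (hsupp : ∀ z x, φ x ≠ z → S x z = 0) (z : Z) (x y : X) :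
    (proj φ z * (S * featMat φ)) x y = S x z * (if φ y = z then 1 else 0) := by
  rw [proj_mul_apply]
  have hSf : (S * featMat φ) x y = S x (φ y) := by
    simp [Matrix.mul_apply, featMat, mul_ite]
  rw [hSf]
  by_cases h1 : φ x = z <;> by_cases h2 : φ y = z
  · simp [h1, h2]
  · simp only [h1, h2, if_true, if_false, one_mul, mul_zero]
    exact hsupp (φ y) x fun h => h2 (h ▸ h1)
  · simp only [h1, h2, if_true, if_false, zero_mul, mul_one]
    exact (hsupp z x h1).symm
  · simp [h1, h2]

lemma mulVec_mem_span {σ r : X → ℝ} {M : Matrix X X ℝ}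
    (h : ∀ x y, M x y = σ x * r y) (w : X → ℝ) :
    M.mulVec w ∈ Submodule.span ℝ {σ} := by
  rw [Submodule.mem_span_singleton]
  refine ⟨∑ y, r y * w y, ?_⟩
  funext x
  simp only [Matrix.mulVec, dotProduct, h, Pi.smul_apply, smul_eq_mul, Finset.sum_mul]
  exact (Finset.sum_congr rfl (fun y _ => by ring)).symm

lemma sandwich_rankone (φ : X → Z) (S : Matrix X Z ℝ)
    (hsupp : ∀ z x, φ x ≠ z → S x z = 0) {T : Matrix X X ℝ} (z : Z)
    (hq : proj φ z * T * projPerp φ z = proj φ z * (S * featMat φ) * T * projPerp φ z)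
    (x y : X) :
    (proj φ z * T * projPerp φ z) x y
      = S x z * (∑ a, (if φ a = z then 1 else 0) * (T * projPerp φ z) a y) := by
  rw [hq, mul_assoc (proj φ z * (S * featMat φ)) T (projPerp φ z), Matrix.mul_apply]
  rw [Finset.sum_congr rfl (fun a _ => by
    rw [projS_mul_apply φ S hsupp, mul_assoc]), ← Finset.mul_sum]

end Aux

section Aux2
variable {X Z : Type*} [Fintype X] [Fintype Z] [DecidableEq X] [DecidableEq Z]

set_option linter.unusedSectionVars false

lemma qm_supp {U : Type*} {φ : X → Z} {T : U → Matrix X X ℝ} {p₀ : X → ℝ}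
    {S : Matrix X Z ℝ} (hqm : IsQuasiMarkov φ T p₀ S) :
    ∀ z x, φ x ≠ z → S x z = 0 := by
  intro z x hx
  have h := congrFun (hqm.1 z).2 x
  simpa [proj, Matrix.mulVec_diagonal, hx] using h.symm

lemma entrance_le_span {U : Type*} (φ : X → Z) (T : U → Matrix X X ℝ) (p₀ : X → ℝ)
    (S : Matrix X Z ℝ) (hqm : IsQuasiMarkov φ T p₀ S) (z : Z) :
    entranceSpace φ T p₀ z ≤ Submodule.span ℝ {fun x => S x z} := by
  have hsupp := qm_supp hqm
  apply sup_le
  · apply iSup_le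
    intro u
    rintro v ⟨w, rfl⟩
    simp only [Matrix.mulVecLin_apply]
    exact mulVec_mem_span (fun x y => sandwich_rankone φ S hsupp z (hqm.2.2 z u) x y) w
  · rw [Submodule.span_singleton_le_iff_mem]
    have hrw : (proj φ z).mulVec p₀ = (proj φ z * (S * featMat φ)).mulVec p₀ := by
      conv_lhs => rw [hqm.2.1]
      rw [Matrix.mulVec_mulVec]
    rw [hrw]
    exact mulVec_mem_span (fun x y => projS_mul_apply φ S hsupp z x y) p₀

lemma span_eq_coeff_smul (φ : X → Z) (z : Z) {σ v : X → ℝ}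
    (hσ : ∑ x, (if φ x = z then σ x else 0) = 1)
    (hv : v ∈ Submodule.span ℝ {σ}) :
    v = (∑ x, if φ x = z then v x else 0) • σ := by
  obtain ⟨c, hc⟩ := Submodule.mem_span_singleton.mp hv
  rw [← hc]
  congr 1
  have : (∑ x, if φ x = z then (c • σ) x else 0)
      = c * ∑ x, (if φ x = z then σ x else 0) := by
    rw [Finset.mul_sum]
    exact Finset.sum_congr rfl fun x _ => by by_cases h : φ x = z <;> simp [h]
  rw [this, hσ, mul_one]

end Aux2


/-- Lemma B.5 (lem:qmrr): every rewiring of a quasi-Markov environment coincides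
with the original environment; hence quasi-Markov environments are
rewire-robust. -/
theorem rewiring_of_quasiMarkov_eq
    {X Z U : Type*} [Fintype X] [Fintype Z] [Fintype U] [DecidableEq X] [DecidableEq Z]
    (φ : X → Z) (p₀ : X → ℝ) (hp₀ : IsProbVec p₀)
    (T : U → Matrix X X ℝ) (hT : ∀ u, IsSubstochastic (T u))
    (S : Matrix X Z ℝ) (hqm : IsQuasiMarkov φ T p₀ S)
    (pbar : X → ℝ) (hpbar : IsProbVec pbar)
    (Tbar : U → Matrix X X ℝ) (hTbar : ∀ u, IsSubstochastic (Tbar u))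
    (h1 : (featMat φ).mulVec pbar = (featMat φ).mulVec p₀)
    (h2 : ∀ u, featMat φ * Tbar u = featMat φ * T u)
    (h3 : ∀ z u, proj φ z * Tbar u * proj φ z = proj φ z * T u * proj φ z)
    (h4 : ∀ z, entranceSpace φ Tbar pbar z ≤ entranceSpace φ T p₀ z) :
    pbar = p₀ ∧ ∀ u, Tbar u = T u := by
  have hsupp := qm_supp hqm
  -- σ_z has total mass 1 on the fibre of z
  have hdσ : ∀ z, (∑ x, if φ x = z then S x z else 0) = 1 := by
    intro z
    have := (hqm.1 z).1.2
    rw [← this]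
    exact Finset.sum_congr rfl fun x _ => by
      by_cases h : φ x = z
      · simp [h]
      · simp [h, hsupp z x h]
  have hle : ∀ z, entranceSpace φ Tbar pbar z ≤ Submodule.span ℝ {fun x => S x z} :=
    fun z => (h4 z).trans (entrance_le_span φ T p₀ S hqm z)
  have hle' : ∀ z, entranceSpace φ T p₀ z ≤ Submodule.span ℝ {fun x => S x z} :=
    fun z => entrance_le_span φ T p₀ S hqm z
  -- representations of the projected initial distributions
  have hpzmem : ∀ (q : X → ℝ) (Tt : U → Matrix X X ℝ) z,
      (proj φ z).mulVec q ∈ entranceSpace φ Tt q z :=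
    fun q Tt z => Submodule.mem_sup_right (Submodule.mem_span_singleton_self _)
  have hcoeffp : ∀ (q : X → ℝ) z,
      (∑ x, if φ x = z then ((proj φ z).mulVec q) x else 0) = (featMat φ).mulVec q z := by
    intro q z
    have hf : (featMat φ).mulVec q z = ∑ x, if φ x = z then q x else 0 := by
      simp [featMat, Matrix.mulVec, dotProduct, ite_mul]
    rw [hf]
    exact Finset.sum_congr rfl fun x _ => by
      by_cases h : φ x = z <;> simp [proj, Matrix.mulVec_diagonal, h]
  have hpbar_rep : ∀ z, (proj φ z).mulVec pbar
      = ((featMat φ).mulVec p₀ z) • (fun x => S x z) := by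
    intro z
    have := span_eq_coeff_smul φ z (hdσ z) (hle z (hpzmem pbar Tbar z))
    rw [this, hcoeffp pbar z, congrFun h1 z]
  have hp₀_rep : ∀ z, (proj φ z).mulVec p₀
      = ((featMat φ).mulVec p₀ z) • (fun x => S x z) := by
    intro z
    have := span_eq_coeff_smul φ z (hdσ z) (hle' z (hpzmem p₀ T z))
    rw [this, hcoeffp p₀ z]
  constructor
  · funext x
    have e1 := congrFun ((hpbar_rep (φ x)).trans (hp₀_rep (φ x)).symm) x
    simpa [proj, Matrix.mulVec_diagonal] using e1
  · intro u
    ext x y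
    by_cases hy : φ y = φ x
    · have h := congrFun (congrFun (h3 (φ x) u) x) y
      have hb : ∀ (A : Matrix X X ℝ), (proj φ (φ x) * A * proj φ (φ x)) x y = A x y := by
        intro A
        simp [proj, Matrix.mul_diagonal, Matrix.diagonal_mul, hy]
      rw [hb (Tbar u), hb (T u)] at h
      exact h
    · -- off-diagonal entrance column
      set z := φ x with hz
      set v := (proj φ z * Tbar u * projPerp φ z).mulVec (Pi.single y 1) with hvdef
      have hvmem : v ∈ entranceSpace φ Tbar pbar z := by
        refine Submodule.mem_sup_left (Submodule.mem_iSup_of_mem u ⟨Pi.single y 1, ?_⟩)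
        rw [hvdef, Matrix.mulVecLin_apply]
      have hrep := span_eq_coeff_smul φ z (hdσ z) (hle z hvmem)
      have hvval : ∀ x', v x' = (if φ x' = z then 1 else 0) * Tbar u x' y := by
        intro x'
        rw [hvdef]
        simp [sandwich_apply, hy]
      -- the coefficient equals the aggregated column, which is shared with T
      have hc : (∑ x', if φ x' = z then v x' else 0)
          = ∑ a, (if φ a = z then 1 else 0) * T u a y := by
        have hft := congrFun (congrFun (h2 u) z) y
        simp only [Matrix.mul_apply, featMat, Matrix.of_apply] at hft
        rw [← hft]
        exact Finset.sum_congr rfl fun x' _ => by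
          rw [hvval x']
          by_cases h : φ x' = z <;> simp [h]
      -- value of T at (x, y) from quasi-Markovness
      have hTval : T u x y = S x z * ∑ a, (if φ a = z then 1 else 0) * T u a y := by
        have h := sandwich_rankone φ S hsupp z (hqm.2.2 z u) x y
        rw [sandwich_apply] at h
        rw [if_pos hz.symm, if_neg hy, one_mul, mul_one] at h
        rw [h]
        congr 1
        exact Finset.sum_congr rfl fun a _ => by rw [mul_projPerp_apply, if_neg hy, mul_one]
      have hTbarval : Tbar u x y = v x := by rw [hvval x, if_pos rfl, one_mul]
      rw [hTbarval, hrep]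
      simp only [Pi.smul_apply, smul_eq_mul, hc, hTval]
      ring
end
end

section
/- Let X, Z, U be finite types with U nonempty, φ : X → Z, r : Z → ℝ, and let {T_u}_{u∈U} and {T̄_u}_{u∈U} be families of matrices in ℝ^{X×X} such that Φ T̄_u = Φ T_u for every u ∈ U, where Φ ∈ ℝ^{Z×X} has entries Φ_{z,x} = 1 if φ(x) = z and 0 otherwise. If q : Z × U → ℝ satisfies the Bellman optimality equation q(φ(x), u) = Σ_{x'∈X} (T_u)_{x',x} · ( r(φ(x')) + max_{u'∈U} q(φ(x'), u') ) for all x ∈ X and u ∈ U, then q also satisfies q(φ(x), u) = Σ_{x'∈X} (T̄_u)_{x',x} · ( r(φ(x')) + max_{u'∈U} q(φ(x'), u') ) for all x ∈ X and u ∈ U. -/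
noncomputable section

lemma sum_featMat_mul {X Z : Type*} [Fintype X] [Fintype Z] [DecidableEq Z]
    (φ : X → Z) (M : Matrix X X ℝ) (g : Z → ℝ) (x : X) :
    ∑ x' : X, M x' x * g (φ x') = ∑ z : Z, (featMat φ * M) z x * g z := by
  simp only [Matrix.mul_apply, featMat, Matrix.of_apply, Finset.sum_mul, ite_mul, one_mul,
    zero_mul]
  rw [Finset.sum_comm]
  refine Finset.sum_congr rfl fun x' _ => ?_
  rw [Finset.sum_ite_eq (Finset.univ : Finset Z) (φ x') (fun z => M x' x * g z)]
  simp

/-- Core of Proposition E.1 (prop:qstar): a function `q` constant on features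
that satisfies the Bellman optimality equation for `{T_u}` also satisfies it for
any family `{T̄_u}` with `Φ T̄_u = Φ T_u` (generalized rewiring). -/
theorem bellman_optimality_of_generalized_rewiring
    {X Z U : Type*} [Fintype X] [Fintype Z] [Fintype U] [Nonempty U] [DecidableEq Z]
    (φ : X → Z) (r : Z → ℝ)
    (T Tbar : U → Matrix X X ℝ)
    (h : ∀ u, featMat φ * Tbar u = featMat φ * T u)
    (q : Z → U → ℝ)
    (hq : ∀ (x : X) (u : U), q (φ x) u =
      ∑ x' : X, T u x' x * (r (φ x') +
        Finset.univ.sup' Finset.univ_nonempty fun u' => q (φ x') u')) :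
    ∀ (x : X) (u : U), q (φ x) u =
      ∑ x' : X, Tbar u x' x * (r (φ x') +
        Finset.univ.sup' Finset.univ_nonempty fun u' => q (φ x') u') := by
  intro x u
  rw [sum_featMat_mul φ (Tbar u) (fun z => r z + Finset.univ.sup' Finset.univ_nonempty fun u' => q z u') x,
    h u, ← sum_featMat_mul φ (T u) (fun z => r z + Finset.univ.sup' Finset.univ_nonempty fun u' => q z u') x]
  exact hq x u
end
end

section
/- Let k be a natural number with k ≥ 1, and define B : ℝ × ℝ → ℝ by B(v₀, v_c) := (1/(k+1)) · ( v₀ − (−1 + v_c) )² + ((k−1)/(k+1)) · ( v_c − (−1 + v_c) )² + (1/(k+1)) · ( v_c − k )². Then B attains its global minimum exactly at (v₀, v_c) = (k − 1, k): for all real v₀, v_c one has B(k−1, k) ≤ B(v₀, v_c), with equality if and only if v₀ = k − 1 and v_c = k. -/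
noncomputable section

/-- The Bellman error of the corridor environment of length `k` under the
always-right policy (Proposition B.3). -/
def corridorBellmanError (k : ℕ) (v₀ vc : ℝ) : ℝ :=
  (1 / ((k : ℝ) + 1)) * (v₀ - (-1 + vc)) ^ 2 +
    (((k : ℝ) - 1) / ((k : ℝ) + 1)) * (vc - (-1 + vc)) ^ 2 +
    (1 / ((k : ℝ) + 1)) * (vc - (k : ℝ)) ^ 2

lemma cbe_diff (k : ℕ) (v₀ vc : ℝ) :
    corridorBellmanError k v₀ vc - corridorBellmanError k ((k : ℝ) - 1) (k : ℝ)
      = (1 / ((k : ℝ) + 1)) * ((v₀ + 1 - vc) ^ 2 + (vc - (k : ℝ)) ^ 2) := by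
  have hc : ((k : ℝ) + 1) ≠ 0 := by positivity
  unfold corridorBellmanError
  field_simp
  ring

/-- Proposition B.3 (prop:bec): the corridor Bellman error attains its global
minimum exactly at `(v₀, v_c) = (k − 1, k)`. -/
theorem corridorBellmanError_min (k : ℕ) (hk : 1 ≤ k) :
    ∀ v₀ vc : ℝ,
      corridorBellmanError k ((k : ℝ) - 1) (k : ℝ) ≤ corridorBellmanError k v₀ vc ∧
      (corridorBellmanError k v₀ vc = corridorBellmanError k ((k : ℝ) - 1) (k : ℝ) ↔
        v₀ = (k : ℝ) - 1 ∧ vc = (k : ℝ)) := by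
  intro v₀ vc
  have hc : (0 : ℝ) < (k : ℝ) + 1 := by positivity
  have hd := cbe_diff k v₀ vc
  constructor
  · have : 0 ≤ (1 / ((k : ℝ) + 1)) * ((v₀ + 1 - vc) ^ 2 + (vc - (k : ℝ)) ^ 2) := by positivity
    linarith
  · constructor
    · intro h
      have h0 : (1 / ((k : ℝ) + 1)) * ((v₀ + 1 - vc) ^ 2 + (vc - (k : ℝ)) ^ 2) = 0 := by
        rw [← hd, h]; ring
      have h1 : (v₀ + 1 - vc) ^ 2 + (vc - (k : ℝ)) ^ 2 = 0 := by
        have hne : (1 / ((k : ℝ) + 1)) ≠ 0 := by positivity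
        exact (mul_eq_zero.mp h0).resolve_left hne
      have h2 : (v₀ + 1 - vc) = 0 ∧ (vc - (k : ℝ)) = 0 := by
        constructor <;> nlinarith [sq_nonneg (v₀ + 1 - vc), sq_nonneg (vc - (k : ℝ))]
      constructor <;> linarith [h2.1, h2.2]
    · rintro ⟨h1, h2⟩
      subst h1 h2
      nlinarith [cbe_diff k ((k : ℝ) - 1) (k : ℝ)]
end
end

section
/- Let μ : X × Ω × X' → ℝ be a stationary distribution of the committed chain, i.e., μ has nonnegative entries summing to 1 and satisfies μ(ξ) = Σ_{ξ₋ ∈ X×Ω×X'} P'(ξ | ξ₋) · μ(ξ₋) for every ξ ∈ X × Ω × X'. Then for all x ∈ X, ω ∈ Ω, and x' ∈ X': μ(x, ω, x') = μ(x, ω) · (T'_ω)_{x',x}, where μ(x, ω) := Σ_{x̄' ∈ X'} μ(x, ω, x̄'). -/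
noncomputable section

/-- The extended transition kernel `T'_ω` on `X' = X ∪ {⊥}` (`Option X`, with
`none` the terminal state): `(T'_ω)_{x',x} = (T_ω)_{x',x}` for `x' ∈ X` and
`(T'_ω)_{⊥,x} = 1 − Σ_{x'∈X} (T_ω)_{x',x}`. -/
def extKernel {X Ω : Type*} [Fintype X] (T : Ω → Matrix X X ℝ)
    (ω : Ω) (x' : Option X) (x : X) : ℝ :=
  match x' with
  | some y => T ω y x
  | none => 1 - ∑ y, T ω y x

/-- The state-transition factor `p(x | x'₋)` of the committed chain: restart
from `p₀` after termination, otherwise deterministic continuation. -/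
def stepState {X : Type*} [DecidableEq X] (p₀ : X → ℝ)
    (x'm : Option X) (x : X) : ℝ :=
  match x'm with
  | none => p₀ x
  | some y => if x = y then 1 else 0

/-- The option-resampling factor `p(ω | x₋, ω₋, x'₋, x)` of the committed
chain: a fresh option is sampled from `π(φ(x))` upon restart or when the
feature changes; otherwise the previous option is kept. -/
def stepOption {X Z Ω : Type*} [DecidableEq Z] [DecidableEq Ω]
    (φ : X → Z) (π : Z → Ω → ℝ)
    (xm : X) (ωm : Ω) (x'm : Option X) (x : X) (ω : Ω) : ℝ :=
  match x'm with
  | none => π (φ x) ω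
  | some y => if φ y ≠ φ xm then π (φ x) ω else if ω = ωm then 1 else 0

/-- The transition kernel `P'(ξ | ξ₋)` of the committed chain on tuples
`ξ = (x, ω, x') ∈ X × Ω × X'`. -/
def committedKernel {X Z Ω : Type*} [Fintype X] [DecidableEq X] [DecidableEq Z]
    [DecidableEq Ω] (φ : X → Z) (p₀ : X → ℝ) (T : Ω → Matrix X X ℝ)
    (π : Z → Ω → ℝ) (ξ ξm : X × Ω × Option X) : ℝ :=
  stepState p₀ ξm.2.2 ξ.1 * stepOption φ π ξm.1 ξm.2.1 ξm.2.2 ξ.1 ξ.2.1 *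
    extKernel T ξ.2.1 ξ.2.2 ξ.1

/-- Decomposition identity of Lemma 5.1 (lem:mu): a stationary distribution `μ`
of the committed chain satisfies `μ(x, ω, x') = μ(x, ω) · (T'_ω)_{x',x}`. -/
theorem stationary_decomposition
    {X Z Ω : Type*} [Fintype X] [Fintype Z] [Fintype Ω]
    [Nonempty X] [Nonempty Z] [Nonempty Ω]
    [DecidableEq X] [DecidableEq Z] [DecidableEq Ω]
    (φ : X → Z)
    (p₀ : X → ℝ) (hp₀ : (∀ x, 0 ≤ p₀ x) ∧ ∑ x, p₀ x = 1)
    (T : Ω → Matrix X X ℝ)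
    (hT : ∀ ω, (∀ x' x, 0 ≤ T ω x' x) ∧ ∀ x, ∑ x', T ω x' x ≤ 1)
    (π : Z → Ω → ℝ) (hπ : ∀ z, (∀ ω, 0 ≤ π z ω) ∧ ∑ ω, π z ω = 1)
    (μ : X × Ω × Option X → ℝ)
    (hμnn : ∀ ξ, 0 ≤ μ ξ) (hμ1 : ∑ ξ, μ ξ = 1)
    (hstat : ∀ ξ, μ ξ = ∑ ξm, committedKernel φ p₀ T π ξ ξm * μ ξm) :
    ∀ (x : X) (ω : Ω) (x' : Option X),
      μ (x, ω, x') = (∑ xb' : Option X, μ (x, ω, xb')) * extKernel T ω x' x := by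
  intro x ω x'
  set S : ℝ := ∑ ξm : X × Ω × Option X,
      stepState p₀ ξm.2.2 x * stepOption φ π ξm.1 ξm.2.1 ξm.2.2 x ω * μ ξm with hS
  have key : ∀ y : Option X, μ (x, ω, y) = S * extKernel T ω y x := by
    intro y
    rw [hstat (x, ω, y), hS, Finset.sum_mul]
    refine Finset.sum_congr rfl fun ξm _ => ?_
    simp only [committedKernel]
    ring
  have hext : ∑ y : Option X, extKernel T ω y x = 1 := by
    rw [Fintype.sum_option]
    simp [extKernel]
  have hsum : (∑ xb' : Option X, μ (x, ω, xb')) = S := by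
    calc (∑ xb' : Option X, μ (x, ω, xb'))
        = ∑ xb' : Option X, S * extKernel T ω xb' x :=
          Finset.sum_congr rfl fun y _ => key y
      _ = S * ∑ y : Option X, extKernel T ω y x := by rw [Finset.mul_sum]
      _ = S := by rw [hext, mul_one]
  rw [hsum, key x']
end
end

section
/- Let μ : X × Ω × X' → ℝ be a stationary distribution of the committed chain, i.e., μ has nonnegative entries summing to 1 and satisfies μ(ξ) = Σ_{ξ₋} P'(ξ | ξ₋) · μ(ξ₋) for every ξ. Define μ_ω ∈ ℝ^X by μ_ω(x) := Σ_{x' ∈ X'} μ(x, ω, x'), and γ_π := Σ_{x∈X, ω∈Ω} μ_ω(x) · γ_{x,ω} where γ_{x,ω} := Σ_{x'∈X} (T_ω)_{x',x}. Then for every z ∈ Z and ω ∈ Ω: Π_z μ_ω = (1 − γ_π) · π(z)(ω) · Π_z p₀ + Π_z T_ω Π_z μ_ω + π(z)(ω) · Σ_{ω'∈Ω} Π_z T_{ω'} Π_z^⊥ μ_{ω'}. -/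
noncomputable section

/-- Stationary-flow equation of Lemma 5.1 (lem:mu): the marginals `μ_ω` of a
stationary distribution `μ` of the committed chain satisfy
`Π_z μ_ω = (1 − γ_π) π(z)(ω) Π_z p₀ + Π_z T_ω Π_z μ_ω
        + π(z)(ω) Σ_{ω'} Π_z T_{ω'} Π_z^⊥ μ_{ω'}`. -/
theorem stationary_flow_equation
    {X Z Ω : Type*} [Fintype X] [Fintype Z] [Fintype Ω]
    [Nonempty X] [Nonempty Z] [Nonempty Ω]
    [DecidableEq X] [DecidableEq Z] [DecidableEq Ω]
    (φ : X → Z)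
    (p₀ : X → ℝ) (hp₀ : (∀ x, 0 ≤ p₀ x) ∧ ∑ x, p₀ x = 1)
    (T : Ω → Matrix X X ℝ)
    (hT : ∀ ω, (∀ x' x, 0 ≤ T ω x' x) ∧ ∀ x, ∑ x', T ω x' x ≤ 1)
    (π : Z → Ω → ℝ) (hπ : ∀ z, (∀ ω, 0 ≤ π z ω) ∧ ∑ ω, π z ω = 1)
    (μ : X × Ω × Option X → ℝ)
    (hμnn : ∀ ξ, 0 ≤ μ ξ) (hμ1 : ∑ ξ, μ ξ = 1)
    (hstat : ∀ ξ, μ ξ = ∑ ξm, committedKernel φ p₀ T π ξ ξm * μ ξm)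
    (μvec : Ω → X → ℝ) (hμvec : ∀ ω x, μvec ω x = ∑ x' : Option X, μ (x, ω, x'))
    (γπ : ℝ) (hγπ : γπ = ∑ x : X, ∑ ω : Ω, μvec ω x * ∑ x' : X, T ω x' x) :
    ∀ (z : Z) (ω : Ω),
      (proj φ z).mulVec (μvec ω) =
        ((1 - γπ) * π z ω) • (proj φ z).mulVec p₀ +
        (proj φ z * T ω * proj φ z).mulVec (μvec ω) +
        π z ω • ∑ ω' : Ω, (proj φ z * T ω' * projPerp φ z).mulVec (μvec ω') := by
  intro z ω
  -- sum of the extended kernel over the target state is 1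
  have hext : ∀ (ω' : Ω) (x : X), ∑ x' : Option X, extKernel T ω' x' x = 1 := by
    intro ω' x
    rw [Fintype.sum_option]
    simp [extKernel]
  -- the stationary distribution factors through the extended kernel
  have h1 : ∀ (x : X) (ω' : Ω) (x' : Option X), μ (x, ω', x') = extKernel T ω' x' x *
      ∑ ξm : X × Ω × Option X,
        stepState p₀ ξm.2.2 x * stepOption φ π ξm.1 ξm.2.1 ξm.2.2 x ω' * μ ξm := by
    intro x ω' x'
    rw [hstat (x, ω', x'), Finset.mul_sum]
    refine Finset.sum_congr rfl fun ξm _ => ?_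
    simp only [committedKernel]
    ring
  have hS : ∀ (x : X) (ω' : Ω), μvec ω' x = ∑ ξm : X × Ω × Option X,
      stepState p₀ ξm.2.2 x * stepOption φ π ξm.1 ξm.2.1 ξm.2.2 x ω' * μ ξm := by
    intro x ω'
    rw [hμvec, Finset.sum_congr rfl fun x' _ => h1 x ω' x', ← Finset.sum_mul, hext, one_mul]
  have hprod : ∀ (x : X) (ω' : Ω) (x' : Option X),
      μ (x, ω', x') = extKernel T ω' x' x * μvec ω' x := by
    intro x ω' x'
    rw [h1, ← hS]
  -- total mass of the marginals is 1
  have htot : ∑ x : X, ∑ ω' : Ω, μvec ω' x = 1 := by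
    rw [← hμ1, Fintype.sum_prod_type]
    refine Finset.sum_congr rfl fun x _ => ?_
    rw [Fintype.sum_prod_type]
    exact Finset.sum_congr rfl fun ω' _ => hμvec ω' x
  -- the key pointwise identity
  have hkey : ∀ x : X, φ x = z →
      μvec ω x = (1 - γπ) * π z ω * p₀ x
        + (∑ j, if φ j = z then T ω x j * μvec ω j else 0)
        + π z ω * ∑ ω' : Ω, ∑ j, (if φ j = z then 0 else T ω' x j * μvec ω' j) := by
    intro x hx
    have hflow : μvec ω x = ∑ xm : X, ∑ ωm : Ω,
        (p₀ x * π (φ x) ω * ((1 - ∑ y, T ωm y xm) * μvec ωm xm)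
          + (if φ x ≠ φ xm then π (φ x) ω else if ω = ωm then 1 else 0)
              * (T ωm x xm * μvec ωm xm)) := by
      rw [hS x ω]
      simp only [Fintype.sum_prod_type]
      refine Finset.sum_congr rfl fun xm _ => Finset.sum_congr rfl fun ωm _ => ?_
      rw [Fintype.sum_option]
      simp only [stepState, stepOption, hprod, extKernel, ite_mul, one_mul, zero_mul,
        Finset.sum_ite_eq, Finset.mem_univ, if_true]
      try split_ifs <;> ring
    have hA : ∑ xm : X, ∑ ωm : Ω,
        p₀ x * π (φ x) ω * ((1 - ∑ y, T ωm y xm) * μvec ωm xm)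
        = (1 - γπ) * π z ω * p₀ x := by
      have e1 : ∑ xm : X, ∑ ωm : Ω, p₀ x * π (φ x) ω * ((1 - ∑ y, T ωm y xm) * μvec ωm xm)
          = p₀ x * π z ω * ((∑ xm : X, ∑ ωm : Ω, μvec ωm xm)
              - ∑ xm : X, ∑ ωm : Ω, μvec ωm xm * ∑ y, T ωm y xm) := by
        rw [hx, ← Finset.sum_sub_distrib, Finset.mul_sum]
        refine Finset.sum_congr rfl fun xm _ => ?_
        rw [← Finset.sum_sub_distrib, Finset.mul_sum]
        refine Finset.sum_congr rfl fun ωm _ => ?_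
        ring
      rw [e1, htot, ← hγπ]
      ring
    have e2 : ∀ xm : X, ∑ ωm : Ω,
        (if φ x ≠ φ xm then π (φ x) ω else if ω = ωm then 1 else 0)
          * (T ωm x xm * μvec ωm xm)
        = if φ xm = z then T ω x xm * μvec ω xm
          else π z ω * ∑ ωm : Ω, T ωm x xm * μvec ωm xm := by
      intro xm
      rw [hx]
      by_cases h : φ xm = z
      · simp only [h, ne_eq, not_true_eq_false, if_false, ite_mul, one_mul, zero_mul,
          Finset.sum_ite_eq, Finset.mem_univ, if_true, not_false_eq_true]
        try simp [h]
      · have hne : z ≠ φ xm := fun hh => h hh.symm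
        simp [hne, h, Finset.mul_sum]
    have e3 : π z ω * ∑ ω' : Ω, ∑ j, (if φ j = z then 0 else T ω' x j * μvec ω' j)
        = ∑ j, (if φ j = z then 0 else π z ω * ∑ ω' : Ω, T ω' x j * μvec ω' j) := by
      rw [Finset.sum_comm, Finset.mul_sum]
      refine Finset.sum_congr rfl fun j _ => ?_
      by_cases hj : φ j = z
      · simp [hj]
      · simp [hj, Finset.mul_sum]
    have hB : ∑ xm : X, ∑ ωm : Ω,
        (if φ x ≠ φ xm then π (φ x) ω else if ω = ωm then 1 else 0)
          * (T ωm x xm * μvec ωm xm)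
        = (∑ j, if φ j = z then T ω x j * μvec ω j else 0)
          + π z ω * ∑ ω' : Ω, ∑ j, (if φ j = z then 0 else T ω' x j * μvec ω' j) := by
      rw [e3, ← Finset.sum_add_distrib]
      refine Finset.sum_congr rfl fun xm _ => ?_
      rw [e2 xm]
      by_cases h : φ xm = z <;> simp [h]
    rw [hflow, Finset.sum_congr rfl fun xm _ => Finset.sum_add_distrib,
      Finset.sum_add_distrib, hA, hB]
    ring
  -- pointwise evaluation of the matrix-vector products
  have hproj : ∀ (v : X → ℝ) (x : X),
      (proj φ z).mulVec v x = if φ x = z then v x else 0 := by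
    intro v x
    rw [proj, Matrix.mulVec_diagonal]
    by_cases h : φ x = z <;> simp [h]
  have hperp : ∀ (v : X → ℝ) (x : X),
      (projPerp φ z).mulVec v x = if φ x = z then 0 else v x := by
    intro v x
    rw [projPerp, Matrix.sub_mulVec]
    simp only [Matrix.one_mulVec, Pi.sub_apply, hproj]
    by_cases h : φ x = z <;> simp [h]
  have hmid : ∀ (ω' : Ω) (x : X), (proj φ z * T ω' * proj φ z).mulVec (μvec ω') x
      = if φ x = z then ∑ j, (if φ j = z then T ω' x j * μvec ω' j else 0) else 0 := by
    intro ω' x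
    have hw : (proj φ z).mulVec (μvec ω') = fun j => if φ j = z then μvec ω' j else 0 :=
      funext fun j => hproj _ j
    rw [← Matrix.mulVec_mulVec, ← Matrix.mulVec_mulVec, hproj, hw]
    by_cases h : φ x = z
    · rw [if_pos h, if_pos h]
      simp only [Matrix.mulVec, dotProduct]
      refine Finset.sum_congr rfl fun j _ => ?_
      rw [mul_ite, mul_zero]
    · rw [if_neg h, if_neg h]
  have hmidp : ∀ (ω' : Ω) (x : X), (proj φ z * T ω' * projPerp φ z).mulVec (μvec ω') x
      = if φ x = z then ∑ j, (if φ j = z then 0 else T ω' x j * μvec ω' j) else 0 := by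
    intro ω' x
    have hw : (projPerp φ z).mulVec (μvec ω') = fun j => if φ j = z then 0 else μvec ω' j :=
      funext fun j => hperp _ j
    rw [← Matrix.mulVec_mulVec, ← Matrix.mulVec_mulVec, hproj, hw]
    by_cases h : φ x = z
    · rw [if_pos h, if_pos h]
      simp only [Matrix.mulVec, dotProduct]
      refine Finset.sum_congr rfl fun j _ => ?_
      rw [mul_ite, mul_zero]
    · rw [if_neg h, if_neg h]
  funext x
  simp only [Pi.add_apply, Pi.smul_apply, smul_eq_mul, Finset.sum_apply,
    hproj, hmid, hmidp]
  by_cases hx : φ x = z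
  · simp only [hx, if_true]
    rw [hkey x hx]
    try ring
  · simp [hx]
end
end

section
/- Let {T_ω}_{ω∈Ω} be a family of substochastic matrices, p₀ ∈ ℝ^X a probability vector, π a behavior policy with π(z)(ω) > 0 for all z ∈ Z and ω ∈ Ω, and let {μ_ω}_{ω∈Ω} ⊂ ℝ^X be nonnegative vectors and γ_π ∈ ℝ a constant satisfying, for all z ∈ Z and ω ∈ Ω, the stationary-flow equation Π_z μ_ω = (1 − γ_π) · π(z)(ω) · Π_z p₀ + Π_z T_ω Π_z μ_ω + π(z)(ω) · Σ_{ω'∈Ω} Π_z T_{ω'} Π_z^⊥ μ_{ω'}. Fix z ∈ Z and ω ∈ Ω. Define σ̃_z := Σ_{ω'∈Ω} Π_z T_{ω'} Π_z^⊥ μ_{ω'} + (1 − γ_π) · Π_z p₀, assume 𝟙ᵀ σ̃_z > 0, and set σ_z := σ̃_z / (𝟙ᵀ σ̃_z). Let T̄_ω ∈ ℝ^{X×X} satisfy Π_z T̄_ω Π_z = Π_z T_ω Π_z, assume I − Π_z T̄_ω is invertible, let ψ̃_z := (I − Π_z T̄_ω)⁻¹ σ_z, assume 𝟙ᵀ ψ̃_z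 ≠ 0, and set ψ_z := ψ̃_z / (𝟙ᵀ ψ̃_z). Then φ_zᵀ μ_ω ≠ 0 and ψ_z = Π_z μ_ω / (φ_zᵀ μ_ω). -/
noncomputable section

open Matrix

/-- Core identity in the proof of Lemma 5.2 (lem:phat): the Bayesian
disaggregation probabilities `ψ_z^ω` of the π-MDP equal the normalized
stationary distribution `Π_z μ_ω / (φ_zᵀ μ_ω)`. -/
theorem disaggregation_eq_normalized_stationary
    {X Z Ω : Type*} [Fintype X] [Fintype Z] [Fintype Ω] [Nonempty Ω]
    [DecidableEq X] [DecidableEq Z]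
    (φ : X → Z)
    (T : Ω → Matrix X X ℝ) (hT : ∀ ω, IsSubstochastic (T ω))
    (p₀ : X → ℝ) (hp₀ : IsProbVec p₀)
    (π : Z → Ω → ℝ) (hπpos : ∀ z ω, 0 < π z ω) (hπ : ∀ z, ∑ ω, π z ω = 1)
    (μvec : Ω → X → ℝ) (hμnn : ∀ ω x, 0 ≤ μvec ω x)
    (γπ : ℝ)
    (hflow : ∀ (z : Z) (ω : Ω),
      (proj φ z).mulVec (μvec ω) =
        ((1 - γπ) * π z ω) • (proj φ z).mulVec p₀ +
        (proj φ z * T ω * proj φ z).mulVec (μvec ω) +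
        π z ω • ∑ ω' : Ω, (proj φ z * T ω' * projPerp φ z).mulVec (μvec ω'))
    (z : Z) (ω : Ω)
    (σt : X → ℝ)
    (hσt : σt = (∑ ω' : Ω, (proj φ z * T ω' * projPerp φ z).mulVec (μvec ω')) +
      (1 - γπ) • (proj φ z).mulVec p₀)
    (hσtsum : 0 < ∑ x, σt x)
    (σ : X → ℝ) (hσ : σ = (∑ x, σt x)⁻¹ • σt)
    (Tbar : Matrix X X ℝ)
    (hTbar : proj φ z * Tbar * proj φ z = proj φ z * T ω * proj φ z)
    (hinv : IsUnit (1 - proj φ z * Tbar))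
    (ψt : X → ℝ) (hψt : ψt = (1 - proj φ z * Tbar)⁻¹.mulVec σ)
    (hψtsum : ∑ x, ψt x ≠ 0)
    (ψ : X → ℝ) (hψ : ψ = (∑ x, ψt x)⁻¹ • ψt) :
    featRow φ z ⬝ᵥ μvec ω ≠ 0 ∧
      ψ = (featRow φ z ⬝ᵥ μvec ω)⁻¹ • (proj φ z).mulVec (μvec ω) := by
  set P := proj φ z with hP
  set A := (1 : Matrix X X ℝ) - P * Tbar with hA
  set c := ∑ x, σt x with hc
  set s := ∑ x, ψt x with hs
  have hc0 : c ≠ 0 := ne_of_gt hσtsum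
  have hπ0 : π z ω ≠ 0 := ne_of_gt (hπpos z ω)
  have hPP : P * P = P := by
    rw [hP, proj, Matrix.diagonal_mul_diagonal]
    refine congrArg Matrix.diagonal ?_
    funext x; by_cases h : φ x = z <;> simp [h]
  -- step 1: A (P μ) = π z ω • σt
  have h1 : A.mulVec (P.mulVec (μvec ω)) = π z ω • σt := by
    have : A.mulVec (P.mulVec (μvec ω))
        = P.mulVec (μvec ω) - (P * T ω * P).mulVec (μvec ω) := by
      rw [hA, Matrix.sub_mulVec, Matrix.one_mulVec, Matrix.mulVec_mulVec, hTbar]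
    rw [this, hflow z ω, hσt]
    ext x
    simp [Pi.add_apply, Pi.smul_apply, smul_eq_mul]
    ring
  -- step 2: P μ = (π z ω * c) • ψt
  have hAinv : A⁻¹ * A = 1 := Matrix.nonsing_inv_mul A ((Matrix.isUnit_iff_isUnit_det A).mp hinv)
  have h2 : P.mulVec (μvec ω) = (π z ω * c) • ψt := by
    have : P.mulVec (μvec ω) = A⁻¹.mulVec (A.mulVec (P.mulVec (μvec ω))) := by
      rw [Matrix.mulVec_mulVec, hAinv, Matrix.one_mulVec]
    rw [this, h1, Matrix.mulVec_smul, hψt, hσ, Matrix.mulVec_smul, smul_smul,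
      mul_assoc, mul_inv_cancel₀ hc0, mul_one]
  -- step 3: feat dot = sum of P μ
  have h3 : featRow φ z ⬝ᵥ μvec ω = ∑ x, P.mulVec (μvec ω) x := by
    simp [featRow, dotProduct, hP, proj, Matrix.mulVec_diagonal]
  have h4 : featRow φ z ⬝ᵥ μvec ω = π z ω * c * s := by
    rw [h3, h2]
    simp [Finset.smul_sum, smul_eq_mul, hs, Finset.mul_sum]
  refine ⟨by rw [h4]; exact mul_ne_zero (mul_ne_zero hπ0 hc0) hψtsum, ?_⟩
  rw [h4, h2, hψ, smul_smul]
  congr 1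
  field_simp
end
end

section
/- Let p₀ ∈ ℝ^X be a probability vector, {T_u}_{u∈U} a family of substochastic matrices, and Σ ∈ ℝ^{X×Z} a matrix whose columns σ_z are probability vectors with Π_z σ_z = σ_z. Define p̄₀ := Σ Φ p₀ and, for each u ∈ U, the matrix T̄_u by (T̄_u)_{x',x} := (T_u)_{x',x} if φ(x') = φ(x) and (T̄_u)_{x',x} := (Σ Φ T_u)_{x',x} otherwise. Then: (i) Φ p̄₀ = Φ p₀; (ii) Φ T̄_u = Φ T_u for all u ∈ U; (iii) Π_z T̄_u Π_z = Π_z T_u Π_z for all z ∈ Z and u ∈ U; (iv) (p̄₀, {T̄_u}) is quasi-Markov with entrance matrix Σ, i.e., p̄₀ = Σ Φ p̄₀ and Π_z T̄_u Π_z^⊥ = Π_z Σ Φ T̄_u Π_z^⊥ for all z ∈ Z and u ∈ U; and (v) if additionally σ_z ∈ ς_z for every z ∈ Z, where ς_z := Σ_{u∈U} range(Π_z T_u Π_z^⊥) + span{Π_z p₀}, then the entrance space ς̄_z := Σ_{u∈U} range(Π_z T̄_u Π_z^⊥) + span{Π_z p̄₀} of the rewired system satisfies ς̄_z ⊆ ς_z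 for every z ∈ Z. -/
noncomputable section

open Matrix

section Helpers

variable {X Z : Type*} [Fintype X] [Fintype Z] [DecidableEq X] [DecidableEq Z]

lemma S_support (φ : X → Z) (S : Matrix X Z ℝ)
    (hS : ∀ z, (proj φ z).mulVec (fun x => S x z) = fun x => S x z)
    {x : X} {z : Z} (h : φ x ≠ z) : S x z = 0 := by
  have := congrFun (hS z) x
  rw [proj, mulVec_diagonal, if_neg h, zero_mul] at this
  exact this.symm

lemma featMat_mul_S (φ : X → Z) (S : Matrix X Z ℝ)
    (hS : ∀ z, IsProbVec (fun x => S x z) ∧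
      (proj φ z).mulVec (fun x => S x z) = fun x => S x z) :
    featMat φ * S = 1 := by
  have hsupp := fun {x z} h => S_support φ S (fun z => (hS z).2) (x := x) (z := z) h
  ext z z'
  simp only [mul_apply, featMat, of_apply, one_apply]
  by_cases h : z = z'
  · subst h
    rw [if_pos rfl]
    rw [show (∑ x, (if φ x = z then (1:ℝ) else 0) * S x z) = ∑ x, S x z from
      Finset.sum_congr rfl fun x _ => ?_]
    · exact (hS z).1.2
    by_cases hx : φ x = z
    · simp [hx]
    · simp [hx, hsupp hx]
  · rw [if_neg h]
    refine Finset.sum_eq_zero fun x _ => ?_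
    by_cases hx : φ x = z
    · have hx' : φ x ≠ z' := by rw [hx]; exact h
      simp [hx, hsupp hx']
    · simp [hx]

/-- `Π_z Σ M v = (M v)_z • σ_z`. -/
lemma proj_S_mul (φ : X → Z) (S : Matrix X Z ℝ)
    (hsupp : ∀ {x : X} {z : Z}, φ x ≠ z → S x z = 0)
    (z : Z) (M : Matrix Z X ℝ) (v : X → ℝ) :
    (proj φ z * S * M).mulVec v = (M.mulVec v z) • (fun x => S x z) := by
  have hPS : proj φ z * S = Matrix.of (fun x z'' => if z'' = z then S x z else 0) := by
    ext x z''
    rw [proj, diagonal_mul, of_apply]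
    by_cases hx : φ x = z
    · subst hx
      by_cases hz : z'' = φ x
      · simp [hz]
      · simp [hz, hsupp (Ne.symm (by simpa using hz))]
    · rw [if_neg hx, zero_mul]
      by_cases hz : z'' = z
      · subst hz; rw [if_pos rfl, hsupp hx]
      · rw [if_neg hz]
  funext x
  rw [← mulVec_mulVec, hPS]
  simp only [mulVec, dotProduct, of_apply, Pi.smul_apply, smul_eq_mul, ite_mul, zero_mul]
  rw [Finset.sum_ite_eq']
  simp [mul_comm, mulVec, dotProduct]

end Helpers

/-- Lemma B.2 (lem:epi), rewiring and quasi-Markov part: the π-rewiring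
`(p̄₀, {T̄_u})` built from an entrance matrix `Σ` is a quasi-Markov
(generalized) rewiring of `(p₀, {T_u})`, and if each entrance distribution
`σ_z` lies in the entrance space `ς_z` then the rewired entrance spaces satisfy
`ς̄_z ⊆ ς_z`. -/
theorem pi_rewiring_is_quasiMarkov_rewiring
    {X Z U : Type*} [Fintype X] [Fintype Z] [Fintype U] [DecidableEq X] [DecidableEq Z]
    (φ : X → Z)
    (p₀ : X → ℝ) (hp₀ : IsProbVec p₀)
    (T : U → Matrix X X ℝ) (hT : ∀ u, IsSubstochastic (T u))
    (S : Matrix X Z ℝ)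
    (hS : ∀ z, IsProbVec (fun x => S x z) ∧
      (proj φ z).mulVec (fun x => S x z) = fun x => S x z)
    (pbar : X → ℝ) (hpbar : pbar = (S * featMat φ).mulVec p₀)
    (Tbar : U → Matrix X X ℝ)
    (hTbar : ∀ u x' x, Tbar u x' x =
      if φ x' = φ x then T u x' x else (S * featMat φ * T u) x' x) :
    ((featMat φ).mulVec pbar = (featMat φ).mulVec p₀) ∧
    (∀ u, featMat φ * Tbar u = featMat φ * T u) ∧
    (∀ z u, proj φ z * Tbar u * proj φ z = proj φ z * T u * proj φ z) ∧
    (pbar = (S * featMat φ).mulVec pbar ∧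
      ∀ z u, proj φ z * Tbar u * projPerp φ z =
        proj φ z * (S * featMat φ) * Tbar u * projPerp φ z) ∧
    ((∀ z, (fun x => S x z) ∈ entranceSpace φ T p₀ z) →
      ∀ z, entranceSpace φ Tbar pbar z ≤ entranceSpace φ T p₀ z) := by

  have hsupp : ∀ {x : X} {z : Z}, φ x ≠ z → S x z = 0 :=
    fun h => S_support φ S (fun z => (hS z).2) h
  have hΦS : featMat φ * S = 1 := featMat_mul_S φ S hS
  -- (ii)
  have part2 : ∀ u, featMat φ * Tbar u = featMat φ * T u := by
    intro u
    have key : featMat φ * (S * featMat φ * T u) = featMat φ * T u := by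
      rw [← Matrix.mul_assoc, ← Matrix.mul_assoc, hΦS, Matrix.one_mul]
    ext z x
    rw [Matrix.mul_apply, Matrix.mul_apply]
    by_cases h : φ x = z
    · refine Finset.sum_congr rfl fun x' _ => ?_
      by_cases hx' : φ x' = z
      · rw [hTbar, if_pos (hx'.trans h.symm)]
      · simp [featMat, hx']
    · have hkey := congrFun (congrFun key z) x
      rw [Matrix.mul_apply, Matrix.mul_apply] at hkey
      rw [← hkey]
      refine Finset.sum_congr rfl fun x' _ => ?_
      by_cases hx' : φ x' = z
      · rw [hTbar, if_neg (fun e => h (e.symm.trans hx'))]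
      · simp [featMat, hx']
  -- (i)
  have part1 : (featMat φ).mulVec pbar = (featMat φ).mulVec p₀ := by
    rw [hpbar, mulVec_mulVec, ← Matrix.mul_assoc, hΦS, Matrix.one_mul]
  -- (iii)
  have part3 : ∀ z u, proj φ z * Tbar u * proj φ z = proj φ z * T u * proj φ z := by
    intro z u
    have e : ∀ (M : Matrix X X ℝ) x' x, (proj φ z * M * proj φ z) x' x =
        (if φ x' = z then (1:ℝ) else 0) * M x' x * (if φ x = z then 1 else 0) := by
      intro M x' x
      rw [proj, mul_diagonal, diagonal_mul]
    ext x' x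
    rw [e, e]
    by_cases h1 : φ x' = z
    · by_cases h2 : φ x = z
      · rw [hTbar, if_pos (h1.trans h2.symm)]
      · simp [h2]
    · simp [h1]
  -- (iv) first half
  have part4a : pbar = (S * featMat φ).mulVec pbar := by
    have hSS : (S * featMat φ) * (S * featMat φ) = S * featMat φ := by
      rw [Matrix.mul_assoc, ← Matrix.mul_assoc (featMat φ), hΦS, Matrix.one_mul]
    rw [hpbar, mulVec_mulVec, hSS]
  -- (iv) second half
  have part4b : ∀ z u, proj φ z * Tbar u * projPerp φ z =
      proj φ z * (S * featMat φ) * Tbar u * projPerp φ z := by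
    intro z u
    have hmid : proj φ z * (S * featMat φ) * Tbar u
        = proj φ z * (S * featMat φ * T u) := by
      rw [Matrix.mul_assoc (proj φ z), Matrix.mul_assoc S, part2,
        ← Matrix.mul_assoc S, ← Matrix.mul_assoc]
    rw [hmid]
    have eL : ∀ (M : Matrix X X ℝ) x' x, (proj φ z * M * projPerp φ z) x' x =
        (if φ x' = z then (1:ℝ) else 0) * M x' x * (1 - if φ x = z then 1 else 0) := by
      intro M x' x
      simp only [projPerp, Matrix.mul_sub, Matrix.mul_one, Matrix.sub_apply, proj,
        Matrix.mul_diagonal, Matrix.diagonal_mul]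
      ring
    ext x' x
    rw [eL, eL]
    by_cases h1 : φ x' = z
    · by_cases h2 : φ x = z
      · simp [h2]
      · rw [hTbar, if_neg (fun (e : φ x' = φ x) => h2 (e.symm.trans h1))]
    · simp [h1]
  refine ⟨part1, part2, part3, ⟨part4a, part4b⟩, ?_⟩
  -- (v)
  intro hσ z
  have hσz : (fun x => S x z) ∈ entranceSpace φ T p₀ z := hσ z
  refine sup_le (iSup_le fun u => ?_) ?_
  · rintro w ⟨v, rfl⟩
    rw [mulVecLin_apply]
    have e1 : proj φ z * Tbar u * projPerp φ z
        = proj φ z * S * (featMat φ * (Tbar u * projPerp φ z)) := by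
      rw [part4b z u]; simp only [Matrix.mul_assoc]
    rw [e1, proj_S_mul φ S hsupp]
    exact Submodule.smul_mem _ _ hσz
  · refine Submodule.span_le.mpr (Set.singleton_subset_iff.mpr ?_)
    have e2 : (proj φ z).mulVec pbar = (proj φ z * S * featMat φ).mulVec p₀ := by
      rw [hpbar, mulVec_mulVec]
      congr 1
      simp only [Matrix.mul_assoc]
    rw [e2, proj_S_mul φ S hsupp]
    exact Submodule.smul_mem _ _ hσz
end
end

section
/- Let D be a finite nonempty type, F : (D → ℝ) → (D → ℝ) a map that is nonexpansive in the maximum norm (i.e., max_d |(F Q)(d) − (F Q')(d)| ≤ max_d |Q(d) − Q'(d)| for all Q, Q'), and M : D → ℝ with 0 < M(d) ≤ 1 for all d ∈ D. Define F_M : (D → ℝ) → (D → ℝ) by (F_M Q)(d) := Q(d) + M(d) · ( (F Q)(d) − Q(d) ). Then: (a) F_M is nonexpansive in the maximum norm; and (b) for every Q : D → ℝ, F_M Q = Q if and only if F Q = Q. -/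
/-- Key step in the proof of Lemma 5.1' (lem:ode): if `F` is max-norm
nonexpansive and `0 < M(d) ≤ 1`, then the entrywise-weighted operator
`(F_M Q)(d) = Q(d) + M(d)((F Q)(d) − Q(d))` is (a) max-norm nonexpansive and
(b) has exactly the same fixed points as `F`. -/
theorem weighted_operator_nonexpansive_and_fixed_points
    {D : Type*} [Fintype D] [Nonempty D]
    (F : (D → ℝ) → (D → ℝ))
    (hF : ∀ Q Q' : D → ℝ,
      (Finset.univ.sup' Finset.univ_nonempty fun d => |F Q d - F Q' d|) ≤
        Finset.univ.sup' Finset.univ_nonempty fun d => |Q d - Q' d|)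
    (M : D → ℝ) (hM : ∀ d, 0 < M d ∧ M d ≤ 1)
    (FM : (D → ℝ) → (D → ℝ))
    (hFM : ∀ (Q : D → ℝ) (d : D), FM Q d = Q d + M d * (F Q d - Q d)) :
    (∀ Q Q' : D → ℝ,
      (Finset.univ.sup' Finset.univ_nonempty fun d => |FM Q d - FM Q' d|) ≤
        Finset.univ.sup' Finset.univ_nonempty fun d => |Q d - Q' d|) ∧
    (∀ Q : D → ℝ, FM Q = Q ↔ F Q = Q) := by
  constructor
  · intro Q Q'
    apply Finset.sup'_le
    intro d _
    set S := Finset.univ.sup' Finset.univ_nonempty fun d => |Q d - Q' d| with hS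
    have h1 : |Q d - Q' d| ≤ S := Finset.le_sup' (fun d => |Q d - Q' d|) (Finset.mem_univ d)
    have h2 : |F Q d - F Q' d| ≤ S :=
      le_trans (Finset.le_sup' (fun d => |F Q d - F Q' d|) (Finset.mem_univ d)) (hF Q Q')
    have hMd := hM d
    have key : FM Q d - FM Q' d
        = (1 - M d) * (Q d - Q' d) + M d * (F Q d - F Q' d) := by
      rw [hFM, hFM]; ring
    calc |FM Q d - FM Q' d|
        ≤ |(1 - M d) * (Q d - Q' d)| + |M d * (F Q d - F Q' d)| := by
          rw [key]; exact abs_add_le _ _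
      _ = (1 - M d) * |Q d - Q' d| + M d * |F Q d - F Q' d| := by
          rw [abs_mul, abs_mul, abs_of_nonneg (by linarith [hMd.2] : (0:ℝ) ≤ 1 - M d),
            abs_of_pos hMd.1]
      _ ≤ (1 - M d) * S + M d * S := by
          have := hMd.1; have := hMd.2
          gcongr <;> linarith
      _ = S := by ring
  · intro Q
    constructor
    · intro h
      funext d
      have hd : FM Q d = Q d := congrFun h d
      rw [hFM] at hd
      have hMd := (hM d).1
      have : M d * (F Q d - Q d) = 0 := by linarith
      rcases mul_eq_zero.mp this with h' | h'
      · exact absurd h' (ne_of_gt hMd)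
      · linarith
    · intro h
      funext d
      rw [hFM, congrFun h d]
      ring
end

section
/- Let S, X, Z be finite types, w : S → ℝ a probability mass function with w(s) > 0 for all s ∈ S, x : S → X a surjective map, R : S → ℝ, φ : X → Z, and set z := φ ∘ x. For x̂ ∈ X define V(x̂) := ( Σ_{s : x(s) = x̂} w(s) R(s) ) / ( Σ_{s : x(s) = x̂} w(s) ), and for ẑ ∈ Z in the range of z define m(ẑ) := ( Σ_{s : z(s) = ẑ} w(s) R(s) ) / ( Σ_{s : z(s) = ẑ} w(s) ). For v : Z → ℝ define the value error VE(v) := Σ_{s∈S} w(s) · ( v(z(s)) − V(x(s)) )² and the value risk R_V(v) := Σ_{s∈S} w(s) · ( v(z(s)) − m(z(s)) )². Then a function v : Z → ℝ minimizes VE over all functions Z → ℝ if and only if it minimizes R_V over all functions Z → ℝ. -/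
/-- Projection identity: if `c t` is the `w`-conditional mean of `R` on the
fiber of `f` over `t` (for `t` in the range of `f`), then for any `u : T → ℝ`,
`∑ w s * u (f s) * c (f s) = ∑ w s * u (f s) * R s`. -/
lemma cond_mean_proj {S T : Type*} [Fintype S] [Fintype T] [DecidableEq T]
    (w R : S → ℝ) (hw : ∀ s, 0 < w s) (f : S → T) (u c : T → ℝ)
    (hc : ∀ t ∈ Set.range f, c t =
      (∑ s ∈ Finset.univ.filter (fun s => f s = t), w s * R s) /
        (∑ s ∈ Finset.univ.filter (fun s => f s = t), w s)) :
    ∑ s, w s * u (f s) * c (f s) = ∑ s, w s * u (f s) * R s := by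
  rw [← Finset.sum_fiberwise Finset.univ f (fun s => w s * u (f s) * c (f s)),
      ← Finset.sum_fiberwise Finset.univ f (fun s => w s * u (f s) * R s)]
  refine Finset.sum_congr rfl fun t _ => ?_
  by_cases ht : t ∈ Set.range f
  · have h1 : ∀ s ∈ Finset.univ.filter (fun s => f s = t), f s = t := by
      intro s hs; simpa using hs
    have hpos : 0 < ∑ s ∈ Finset.univ.filter (fun s => f s = t), w s := by
      obtain ⟨s0, hs0⟩ := ht
      exact Finset.sum_pos' (fun s _ => (hw s).le)
        ⟨s0, by simp [hs0], hw s0⟩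
    have hct : c t * (∑ s ∈ Finset.univ.filter (fun s => f s = t), w s) =
        ∑ s ∈ Finset.univ.filter (fun s => f s = t), w s * R s := by
      rw [hc t ht, div_mul_cancel₀ _ hpos.ne']
    calc ∑ s ∈ Finset.univ.filter (fun s => f s = t), w s * u (f s) * c (f s)
        = ∑ s ∈ Finset.univ.filter (fun s => f s = t), u t * c t * w s := by
          refine Finset.sum_congr rfl fun s hs => ?_
          rw [h1 s hs]; ring
      _ = u t * (c t * ∑ s ∈ Finset.univ.filter (fun s => f s = t), w s) := by
          rw [← Finset.mul_sum]; ring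
      _ = u t * ∑ s ∈ Finset.univ.filter (fun s => f s = t), w s * R s := by
          rw [hct]
      _ = ∑ s ∈ Finset.univ.filter (fun s => f s = t), w s * u (f s) * R s := by
          rw [Finset.mul_sum]
          refine Finset.sum_congr rfl fun s hs => ?_
          rw [h1 s hs]; ring
  · have : Finset.univ.filter (fun s => f s = t) = ∅ := by
      ext s; simp only [Finset.mem_filter, Finset.mem_univ, true_and,
        Finset.notMem_empty, iff_false]
      exact fun h => ht ⟨s, h⟩
    simp [this]

/-- Proposition D.2 (prop:vr), finite-probability form: the value risk `R_V`
has the same minimizers as the value error `VE`. Here `w` is a positive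
probability mass function on a sample space `S`, `x : S → X` the latent state,
`z = φ ∘ x` the observed feature, `R` the return, `V(xh) = E[R | x = xh]`, and
`m(zh) = E[R | z = zh]` for features `zh` in the range of `z`. -/
theorem value_error_value_risk_same_minimizers
    {S X Z : Type*} [Fintype S] [Fintype X] [Fintype Z]
    [DecidableEq X] [DecidableEq Z]
    (w : S → ℝ) (hw : ∀ s, 0 < w s) (hw1 : ∑ s, w s = 1)
    (x : S → X) (hx : Function.Surjective x)
    (R : S → ℝ) (φ : X → Z) (z : S → Z) (hz : z = φ ∘ x)
    (V : X → ℝ)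
    (hV : ∀ xh : X, V xh =
      (∑ s ∈ Finset.univ.filter (fun s => x s = xh), w s * R s) /
        (∑ s ∈ Finset.univ.filter (fun s => x s = xh), w s))
    (m : Z → ℝ)
    (hm : ∀ zh ∈ Set.range z, m zh =
      (∑ s ∈ Finset.univ.filter (fun s => z s = zh), w s * R s) /
        (∑ s ∈ Finset.univ.filter (fun s => z s = zh), w s))
    (VE RV : (Z → ℝ) → ℝ)
    (hVE : ∀ v : Z → ℝ, VE v = ∑ s, w s * (v (z s) - V (x s)) ^ 2)
    (hRV : ∀ v : Z → ℝ, RV v = ∑ s, w s * (v (z s) - m (z s)) ^ 2) :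
    ∀ v : Z → ℝ, (∀ v' : Z → ℝ, VE v ≤ VE v') ↔ (∀ v' : Z → ℝ, RV v ≤ RV v') := by
  -- VE v - RV v is a constant independent of v
  have key : ∀ v : Z → ℝ, VE v - RV v =
      (∑ s, w s * (V (x s)) ^ 2) - (∑ s, w s * (m (z s)) ^ 2) := by
    intro v
    have hVproj : ∑ s, w s * (v ∘ φ) (x s) * V (x s)
        = ∑ s, w s * (v ∘ φ) (x s) * R s :=
      cond_mean_proj w R hw x (v ∘ φ) V (fun t _ => hV t)
    have hmproj : ∑ s, w s * v (z s) * m (z s)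
        = ∑ s, w s * v (z s) * R s :=
      cond_mean_proj w R hw z v m hm
    have hzs : ∀ s, z s = φ (x s) := fun s => by rw [hz]; rfl
    have hVproj' : ∑ s, w s * v (z s) * V (x s)
        = ∑ s, w s * v (z s) * R s := by
      simpa only [Function.comp, ← hzs] using hVproj
    rw [hVE, hRV]
    have expand : ∀ s, w s * (v (z s) - V (x s)) ^ 2 - w s * (v (z s) - m (z s)) ^ 2
        = (w s * (V (x s)) ^ 2 - w s * (m (z s)) ^ 2)
          - 2 * (w s * v (z s) * V (x s)) + 2 * (w s * v (z s) * m (z s)) := by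
      intro s; ring
    rw [← Finset.sum_sub_distrib]
    calc ∑ s, (w s * (v (z s) - V (x s)) ^ 2 - w s * (v (z s) - m (z s)) ^ 2)
        = ∑ s, ((w s * (V (x s)) ^ 2 - w s * (m (z s)) ^ 2)
          - 2 * (w s * v (z s) * V (x s)) + 2 * (w s * v (z s) * m (z s))) :=
          Finset.sum_congr rfl fun s _ => expand s
      _ = (∑ s, (w s * (V (x s)) ^ 2 - w s * (m (z s)) ^ 2))
          - 2 * (∑ s, w s * v (z s) * V (x s))
          + 2 * (∑ s, w s * v (z s) * m (z s)) := by
          rw [Finset.sum_add_distrib, Finset.sum_sub_distrib, ← Finset.mul_sum,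
            ← Finset.mul_sum]
      _ = (∑ s, w s * (V (x s)) ^ 2) - (∑ s, w s * (m (z s)) ^ 2) := by
          rw [hVproj', hmproj, Finset.sum_sub_distrib]; ring
  intro v
  constructor
  · intro hmin v'
    have h1 := hmin v'
    have h2 := key v
    have h3 := key v'
    linarith
  · intro hmin v'
    have h1 := hmin v'
    have h2 := key v
    have h3 := key v'
    linarith
end
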